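/- arXiv:1812.01869 — 4 statements merged into one kernel-verified Lean document; each statement's English description precedes it below -/
import Mathlib

section
/- Let (a_n) be a sequence of positive real numbers with inf_n a_n > 0, and let (n_k) be a strictly increasing sequence of positive integers. Then there exists a sequence (m_k) of positive integers with the following property: for any sequence (b_n) of real numbers and any real number α such that sup_n |b_n|/a_n < ∞ and lim_{k→∞} (b_{n_{k-1}+1} + ⋯ + b_{n_k})/(a_{n_{k-1}+1} + ⋯ + a_{n_k}) = α (with n_0 := 0), one has lim_{k→∞} (b_{m_1} + ⋯ + b_{m_k})/(a_{m_1} + ⋯ + a_{m_k}) = α. -/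
open Filter

open Filter Finset

namespace Reseq

variable (a : ℕ → ℝ) (n : ℕ → ℕ)

noncomputable def S (f : ℕ → ℝ) (j : ℕ) : ℝ := ∑ i ∈ Finset.Ioc (n j) (n (j+1)), f i

noncomputable def c (j : ℕ) : ℕ :=
  ⌈(((j:ℝ)+1) * (S n a (j+1) + 1) + 1) / S n a j⌉₊ + 1

noncomputable def Cc (j : ℕ) : ℕ := ∑ s ∈ Finset.range j, c a n s

noncomputable def g (t : ℕ) : ℕ := Nat.findGreatest (fun j => Cc a n j ≤ t) t

def L (j : ℕ) : ℕ := n (j+1) - n j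

noncomputable def Lam (t : ℕ) : ℕ := ∑ s ∈ Finset.range t, L n (g a n s)

noncomputable def tau (k : ℕ) : ℕ := Nat.findGreatest (fun t => Lam a n t < k) k

noncomputable def m (k : ℕ) : ℕ :=
  if k = 0 then 1 else n (g a n (tau a n k)) + (k - Lam a n (tau a n k))

section lemmas

variable {a n} {ε : ℝ}

lemma hL (hmono : StrictMono n) (j : ℕ) : 1 ≤ L n j := by
  have := hmono (show j < j + 1 by omega); unfold L; omega

lemma n_add_L (hmono : StrictMono n) (j : ℕ) : n j + L n j = n (j+1) := by
  have := (hmono (show j < j + 1 by omega)).le; unfold L; omega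

lemma A_ge (hmono : StrictMono n) (hε : 0 < ε) (hεa : ∀ i, 1 ≤ i → ε ≤ a i) (j : ℕ) :
    ε ≤ S n a j := by
  have hne : n j < n (j+1) := hmono (show j < j + 1 by omega)
  have hc : 1 ≤ (Finset.Ioc (n j) (n (j+1))).card := by
    rw [Nat.card_Ioc]; omega
  have h1 : (Finset.Ioc (n j) (n (j+1))).card • ε ≤ ∑ i ∈ Finset.Ioc (n j) (n (j+1)), a i :=
    Finset.card_nsmul_le_sum _ _ _ (fun i hi => hεa i (by simp only [Finset.mem_Ioc] at hi; omega))
  calc ε ≤ ((Finset.Ioc (n j) (n (j+1))).card : ℝ) * ε := by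
        nlinarith [show (1:ℝ) ≤ ((Finset.Ioc (n j) (n (j+1))).card : ℝ) from by exact_mod_cast hc]
    _ = (Finset.Ioc (n j) (n (j+1))).card • ε := (nsmul_eq_mul _ _).symm
    _ ≤ S n a j := h1

lemma A_pos (hmono : StrictMono n) (hε : 0 < ε) (hεa : ∀ i, 1 ≤ i → ε ≤ a i) (j : ℕ) :
    0 < S n a j := hε.trans_le (A_ge hmono hε hεa j)

lemma c_spec (hmono : StrictMono n) (hε : 0 < ε) (hεa : ∀ i, 1 ≤ i → ε ≤ a i) (j : ℕ) :
    ((j:ℝ)+1) * (S n a (j+1) + 1) + 1 ≤ (c a n j : ℝ) * S n a j := by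
  have hA := A_pos hmono hε hεa j
  set x : ℝ := ((j:ℝ)+1) * (S n a (j+1) + 1) + 1 with hx
  have h1 : x / S n a j ≤ (⌈x / S n a j⌉₊ : ℝ) := Nat.le_ceil _
  have h2 : (c a n j : ℝ) = (⌈x / S n a j⌉₊ : ℝ) + 1 := by
    rw [c]; push_cast; ring
  have h3 : x / S n a j ≤ (c a n j : ℝ) := by rw [h2]; linarith
  calc x = (x / S n a j) * S n a j := by field_simp
    _ ≤ (c a n j : ℝ) * S n a j := mul_le_mul_of_nonneg_right h3 hA.le

lemma c_ge_one (j : ℕ) : 1 ≤ c a n j := Nat.le_add_left 1 _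

lemma Cc_succ (j : ℕ) : Cc a n (j+1) = Cc a n j + c a n j := Finset.sum_range_succ _ _

lemma Cc_strict : StrictMono (Cc a n) :=
  strictMono_nat_of_lt_succ (fun j => by rw [Cc_succ]; have := c_ge_one (a := a) (n := n) j; omega)

lemma Cc_ge (j : ℕ) : j ≤ Cc a n j := Cc_strict.le_apply

lemma g_le1 (t : ℕ) : Cc a n (g a n t) ≤ t :=
  Nat.findGreatest_spec (P := fun j => Cc a n j ≤ t) (Nat.zero_le t) (by simp [Cc])

lemma g_lt (t : ℕ) : t < Cc a n (g a n t + 1) := by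
  by_contra h
  push_neg at h
  have h2 : g a n t + 1 ≤ t := le_trans (Cc_ge _) h
  have h3 : g a n t + 1 ≤ g a n t :=
    Nat.le_findGreatest (P := fun j => Cc a n j ≤ t) h2 h
  omega

lemma g_ge {j t : ℕ} (h : Cc a n j ≤ t) : j ≤ g a n t := by
  have h2 := g_lt (a := a) (n := n) t
  have h3 : j < g a n t + 1 := Cc_strict.lt_iff_lt.mp (lt_of_le_of_lt h h2)
  omega

lemma g_eq {j t : ℕ} (h1 : Cc a n j ≤ t) (h2 : t < Cc a n (j+1)) : g a n t = j := by
  have a1 := g_le1 (a := a) (n := n) t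
  have b1 : g a n t < j + 1 := Cc_strict.lt_iff_lt.mp (lt_of_le_of_lt a1 h2)
  have b2 := g_ge h1
  omega

lemma Lam_succ (t : ℕ) : Lam a n (t+1) = Lam a n t + L n (g a n t) := Finset.sum_range_succ _ _

lemma Lam_strict (hmono : StrictMono n) : StrictMono (Lam a n) :=
  strictMono_nat_of_lt_succ (fun t => by
    rw [Lam_succ]; have := hL (n := n) hmono (g a n t); omega)

lemma Lam_ge (hmono : StrictMono n) (t : ℕ) : t ≤ Lam a n t := (Lam_strict hmono).le_apply

lemma tau_lt {k : ℕ} (hk : 1 ≤ k) : Lam a n (tau a n k) < k :=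
  Nat.findGreatest_spec (P := fun t => Lam a n t < k) (Nat.zero_le k) (by simp [Lam]; omega)

lemma tau_ge (hmono : StrictMono n) {k : ℕ} (hk : 1 ≤ k) : k ≤ Lam a n (tau a n k + 1) := by
  by_contra h
  push_neg at h
  have h2 : tau a n k + 1 ≤ k := le_trans (Lam_ge hmono _) h.le
  have h3 : tau a n k + 1 ≤ tau a n k :=
    Nat.le_findGreatest (P := fun t => Lam a n t < k) h2 h
  omega

lemma tau_ge' (hmono : StrictMono n) {t k : ℕ} (h : Lam a n t < k) : t ≤ tau a n k :=
  Nat.le_findGreatest (P := fun t => Lam a n t < k) (le_trans (Lam_ge hmono t) h.le) h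

lemma tau_eq (hmono : StrictMono n) {t k : ℕ} (h1 : Lam a n t < k) (h2 : k ≤ Lam a n (t+1)) :
    tau a n k = t := by
  have hk : 1 ≤ k := by omega
  have a1 := tau_lt (a := a) (n := n) hk
  have a2 := tau_ge (a := a) (n := n) hmono hk
  have b1 : tau a n k < t + 1 := (Lam_strict hmono).lt_iff_lt.mp (lt_of_lt_of_le a1 h2)
  have b2 : t < tau a n k + 1 := (Lam_strict hmono).lt_iff_lt.mp (lt_of_lt_of_le h1 a2)
  omega

lemma m_eq (hmono : StrictMono n) {t k : ℕ} (h1 : Lam a n t < k) (h2 : k ≤ Lam a n (t+1)) :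
    m a n k = n (g a n t) + (k - Lam a n t) := by
  have hk : k ≠ 0 := by omega
  rw [m, if_neg hk, tau_eq hmono h1 h2]

lemma m_pos {k : ℕ} (hk : 1 ≤ k) : 1 ≤ m a n k := by
  rw [m, if_neg (by omega)]
  have := tau_lt (a := a) (n := n) hk
  omega

end lemmas


section sums

variable {a : ℕ → ℝ} {n : ℕ → ℕ}

lemma sum_shift (f : ℕ → ℝ) (u v : ℕ) :
    ∀ r, ∑ i ∈ Finset.Ioc u (u + r), f (v + (i - u)) = ∑ j ∈ Finset.Ioc v (v + r), f j := by
  intro r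
  induction r with
  | zero => simp
  | succ r ih =>
    rw [show u + (r+1) = (u+r) + 1 from rfl, show v + (r+1) = (v+r) + 1 from rfl,
        Finset.sum_Ioc_succ_top (Nat.le_add_right u r) _,
        Finset.sum_Ioc_succ_top (Nat.le_add_right v r) _, ih]
    congr 2
    omega

lemma sum_partial (hmono : StrictMono n) (f : ℕ → ℝ) {t k : ℕ}
    (h1 : Lam a n t < k) (h2 : k ≤ Lam a n (t+1)) :
    ∑ i ∈ Finset.Ioc (Lam a n t) k, f (m a n i)
      = ∑ i ∈ Finset.Ioc (n (g a n t)) (n (g a n t) + (k - Lam a n t)), f i := by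
  have key : ∀ i ∈ Finset.Ioc (Lam a n t) k, f (m a n i) = f (n (g a n t) + (i - Lam a n t)) := by
    intro i hi
    simp only [Finset.mem_Ioc] at hi
    rw [m_eq hmono hi.1 (le_trans hi.2 h2)]
  rw [Finset.sum_congr rfl key]
  obtain ⟨r, rfl⟩ : ∃ r, k = Lam a n t + r := ⟨k - Lam a n t, by omega⟩
  rw [Nat.add_sub_cancel_left]
  exact sum_shift f _ _ r

lemma sum_full (hmono : StrictMono n) (f : ℕ → ℝ) (t : ℕ) :
    ∑ i ∈ Finset.Ioc 0 (Lam a n t), f (m a n i)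
      = ∑ s ∈ Finset.range t, S n f (g a n s) := by
  induction t with
  | zero => simp [Lam]
  | succ t ih =>
    have hle : Lam a n t ≤ Lam a n (t+1) := ((Lam_strict hmono).lt_iff_lt.mpr (Nat.lt_succ_self t)).le
    rw [← Finset.sum_Ioc_consecutive _ (Nat.zero_le (Lam a n t)) hle, ih,
        Finset.sum_range_succ]
    congr 1
    rw [sum_partial hmono f ((Lam_strict hmono).lt_iff_lt.mpr (Nat.lt_succ_self t)) le_rfl]
    have h3 : Lam a n (t+1) - Lam a n t = L n (g a n t) := by
      rw [Lam_succ]; omega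
    rw [h3, n_add_L hmono, S]

lemma master (hmono : StrictMono n) (f : ℕ → ℝ) {k : ℕ} (hk : 1 ≤ k) :
    ∑ i ∈ Finset.Icc 1 k, f (m a n i)
      = (∑ s ∈ Finset.range (tau a n k), S n f (g a n s))
        + ∑ i ∈ Finset.Ioc (n (g a n (tau a n k))) (m a n k), f i := by
  have h1 : Lam a n (tau a n k) < k := tau_lt hk
  have h2 : k ≤ Lam a n (tau a n k + 1) := tau_ge hmono hk
  rw [show Finset.Icc 1 k = Finset.Ioc 0 k by ext i; simp only [Finset.mem_Icc, Finset.mem_Ioc]; omega,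
      ← Finset.sum_Ioc_consecutive _ (Nat.zero_le (Lam a n (tau a n k))) h1.le,
      sum_full hmono, sum_partial hmono f h1 h2]
  congr 2
  rw [m_eq hmono h1 h2]

end sums

end Reseq

/-- Lemma 1.5 (resequencing lemma): given a sequence `a` of positive reals with
`inf_n a_n > 0` (indexed by positive integers) and a strictly increasing sequence
`n` of positive integers (with `n 0 = 0` playing the role of `n₀ := 0`),
there is a sequence `m` of positive integers such that block-ratio convergence
implies convergence of the resequenced Cesàro-type ratios. -/
theorem stmt_0 (a : ℕ → ℝ) (ha : ∃ ε > (0:ℝ), ∀ n, 1 ≤ n → ε ≤ a n)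
    (n : ℕ → ℕ) (hn0 : n 0 = 0) (hmono : StrictMono n) :
    ∃ m : ℕ → ℕ, (∀ k, 1 ≤ k → 1 ≤ m k) ∧
      ∀ (b : ℕ → ℝ) (α : ℝ), (∃ M : ℝ, ∀ i, 1 ≤ i → |b i| ≤ M * a i) →
        Tendsto (fun k => (∑ i ∈ Finset.Ioc (n k) (n (k + 1)), b i) /
            (∑ i ∈ Finset.Ioc (n k) (n (k + 1)), a i)) atTop (nhds α) →
        Tendsto (fun k => (∑ i ∈ Finset.Icc 1 k, b (m i)) /
            (∑ i ∈ Finset.Icc 1 k, a (m i))) atTop (nhds α) := by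

  obtain ⟨ε, hε, hεa⟩ := ha
  refine ⟨Reseq.m a n, fun k hk => Reseq.m_pos hk, ?_⟩
  rintro b α ⟨M, hM⟩ hconv
  have hApos : ∀ j, 0 < Reseq.S n a j := Reseq.A_pos hmono hε hεa
  have hAnn : ∀ j, 0 ≤ Reseq.S n a j := fun j => (hApos j).le
  have hM0 : 0 ≤ M := by
    have h1 := hM 1 le_rfl
    have h2 : 0 < a 1 := lt_of_lt_of_le hε (hεa 1 le_rfl)
    nlinarith [abs_nonneg (b 1)]
  have ha_nn : ∀ i, 1 ≤ i → 0 ≤ a i := fun i hi => le_trans hε.le (hεa i hi)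
  rw [Metric.tendsto_atTop] at hconv ⊢
  intro δ hδ
  have hε'pos : 0 < δ/4 := by linarith
  obtain ⟨J0, hJ0⟩ := hconv (δ/4) hε'pos
  obtain ⟨J1, hJ1⟩ := exists_nat_gt ((M + |α|)/(δ/4))
  have hJ'1 : 1 ≤ max (max J0 J1) 1 := le_max_right _ _
  have hJ'M : M + |α| ≤ (δ/4) * (max (max J0 J1) 1 : ℕ) := by
    rw [div_lt_iff₀ hε'pos] at hJ1
    have h2 : (J1:ℝ) ≤ ((max (max J0 J1) 1 : ℕ) : ℝ) := by
      exact_mod_cast le_trans (le_max_right J0 J1) (le_max_left _ 1)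
    nlinarith
  have hblk : ∀ j, max (max J0 J1) 1 ≤ j →
      |Reseq.S n b j - α * Reseq.S n a j| ≤ (δ/4) * Reseq.S n a j := by
    intro j hj
    have h : dist (Reseq.S n b j / Reseq.S n a j) α < δ/4 :=
      hJ0 j (le_trans (le_trans (le_max_left J0 J1) (le_max_left _ 1)) hj)
    rw [Real.dist_eq] at h
    have hAj := hApos j
    have heq : Reseq.S n b j - α * Reseq.S n a j
        = (Reseq.S n b j / Reseq.S n a j - α) * Reseq.S n a j := by
      field_simp
    rw [heq, abs_mul, abs_of_pos hAj]
    exact mul_le_mul_of_nonneg_right (le_of_lt h) hAj.le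
  obtain ⟨K0, hK0⟩ := exists_nat_gt
    ((∑ s ∈ Finset.range (Reseq.Cc a n (max (max J0 J1) 1)),
        |Reseq.S n b (Reseq.g a n s) - α * Reseq.S n a (Reseq.g a n s)|) / (ε * (δ/4)))
  have hC0 : 0 ≤ ∑ s ∈ Finset.range (Reseq.Cc a n (max (max J0 J1) 1)),
      |Reseq.S n b (Reseq.g a n s) - α * Reseq.S n a (Reseq.g a n s)| :=
    Finset.sum_nonneg (fun s _ => abs_nonneg _)
  refine ⟨max (Reseq.Lam a n (Reseq.Cc a n (max (max J0 J1) 1)) + 1) (K0 + 1), fun k hk => ?_⟩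
  have hkL : Reseq.Lam a n (Reseq.Cc a n (max (max J0 J1) 1)) + 1 ≤ k := le_trans (le_max_left _ _) hk
  have hkK0 : K0 + 1 ≤ k := le_trans (le_max_right _ _) hk
  have hk1 : 1 ≤ k := by omega
  have hNd := Reseq.master hmono (a := a) b hk1
  have hDd := Reseq.master hmono (a := a) a hk1
  have htau : Reseq.Cc a n (max (max J0 J1) 1) ≤ Reseq.tau a n k :=
    Reseq.tau_ge' hmono (by omega)
  have hjJ : max (max J0 J1) 1 ≤ Reseq.g a n (Reseq.tau a n k) := Reseq.g_ge htau
  have hj1 : 1 ≤ Reseq.g a n (Reseq.tau a n k) := le_trans hJ'1 hjJ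
  have htlt := Reseq.tau_lt (a := a) (n := n) hk1
  have htge := Reseq.tau_ge (a := a) (n := n) hmono hk1
  have hmeq := Reseq.m_eq hmono htlt htge
  have hmk_le : Reseq.m a n k ≤ n (Reseq.g a n (Reseq.tau a n k) + 1) := by
    have h3 := Reseq.Lam_succ (a := a) (n := n) (Reseq.tau a n k)
    have h4 := Reseq.n_add_L hmono (Reseq.g a n (Reseq.tau a n k))
    omega
  have hmk_gt : n (Reseq.g a n (Reseq.tau a n k)) < Reseq.m a n k := by omega
  -- abbreviations as local notation only in comments:
  -- T = tau a n k, G = g a n T, SA/SB = full-pass sums, Pa/Pb = partial sums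
  have hPa0 : 0 ≤ ∑ i ∈ Finset.Ioc (n (Reseq.g a n (Reseq.tau a n k))) (Reseq.m a n k), a i :=
    Finset.sum_nonneg (fun i hi => ha_nn i (by simp only [Finset.mem_Ioc] at hi; omega))
  have hPaA : (∑ i ∈ Finset.Ioc (n (Reseq.g a n (Reseq.tau a n k))) (Reseq.m a n k), a i)
      ≤ Reseq.S n a (Reseq.g a n (Reseq.tau a n k)) := by
    apply Finset.sum_le_sum_of_subset_of_nonneg (Finset.Ioc_subset_Ioc_right hmk_le)
    intro i hi _
    simp only [Finset.mem_Ioc] at hi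
    exact ha_nn i (by omega)
  have hPb : |∑ i ∈ Finset.Ioc (n (Reseq.g a n (Reseq.tau a n k))) (Reseq.m a n k), b i|
      ≤ M * ∑ i ∈ Finset.Ioc (n (Reseq.g a n (Reseq.tau a n k))) (Reseq.m a n k), a i := by
    calc |∑ i ∈ Finset.Ioc (n (Reseq.g a n (Reseq.tau a n k))) (Reseq.m a n k), b i|
        ≤ ∑ i ∈ Finset.Ioc (n (Reseq.g a n (Reseq.tau a n k))) (Reseq.m a n k), |b i| :=
          Finset.abs_sum_le_sum_abs _ _
      _ ≤ ∑ i ∈ Finset.Ioc (n (Reseq.g a n (Reseq.tau a n k))) (Reseq.m a n k), M * a i :=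
          Finset.sum_le_sum (fun i hi => hM i (by simp only [Finset.mem_Ioc] at hi; omega))
      _ = M * ∑ i ∈ Finset.Ioc (n (Reseq.g a n (Reseq.tau a n k))) (Reseq.m a n k), a i :=
          (Finset.mul_sum _ _ _).symm
  have hDk : ε * k ≤ (∑ s ∈ Finset.range (Reseq.tau a n k), Reseq.S n a (Reseq.g a n s))
      + ∑ i ∈ Finset.Ioc (n (Reseq.g a n (Reseq.tau a n k))) (Reseq.m a n k), a i := by
    have h1 : (Finset.Icc 1 k).card • ε ≤ ∑ i ∈ Finset.Icc 1 k, a (Reseq.m a n i) :=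
      Finset.card_nsmul_le_sum _ _ _
        (fun i hi => hεa _ (Reseq.m_pos (by simp only [Finset.mem_Icc] at hi; omega)))
    rw [hDd] at h1
    have h2 : (Finset.Icc 1 k).card = k := by rw [Nat.card_Icc]; omega
    rw [h2, nsmul_eq_mul, mul_comm] at h1
    exact h1
  have hkpos : (0:ℝ) < (k:ℝ) := by exact_mod_cast Nat.lt_of_lt_of_le Nat.zero_lt_one hk1
  have hDpos : 0 < (∑ s ∈ Finset.range (Reseq.tau a n k), Reseq.S n a (Reseq.g a n s))
      + ∑ i ∈ Finset.Ioc (n (Reseq.g a n (Reseq.tau a n k))) (Reseq.m a n k), a i :=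
    lt_of_lt_of_le (by positivity) hDk
  -- SA lower bound from the completed passes of block (G-1)
  have hSAlb : ((Reseq.g a n (Reseq.tau a n k) : ℝ)) * (Reseq.S n a (Reseq.g a n (Reseq.tau a n k)) + 1) + 1
      ≤ ∑ s ∈ Finset.range (Reseq.tau a n k), Reseq.S n a (Reseq.g a n s) := by
    have hgle := Reseq.g_le1 (a := a) (n := n) (Reseq.tau a n k)
    have hjm1 : (Reseq.g a n (Reseq.tau a n k) - 1) + 1 = Reseq.g a n (Reseq.tau a n k) := by omega
    have hsub : Finset.Ico (Reseq.Cc a n (Reseq.g a n (Reseq.tau a n k) - 1))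
        (Reseq.Cc a n ((Reseq.g a n (Reseq.tau a n k) - 1) + 1)) ⊆ Finset.range (Reseq.tau a n k) := by
      intro s hs
      simp only [Finset.mem_Ico, Finset.mem_range] at hs ⊢
      have h5 : Reseq.Cc a n ((Reseq.g a n (Reseq.tau a n k) - 1) + 1) ≤ Reseq.tau a n k := by
        rw [hjm1]; exact hgle
      omega
    have h1 : ∑ s ∈ Finset.Ico (Reseq.Cc a n (Reseq.g a n (Reseq.tau a n k) - 1))
          (Reseq.Cc a n ((Reseq.g a n (Reseq.tau a n k) - 1) + 1)), Reseq.S n a (Reseq.g a n s)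
        ≤ ∑ s ∈ Finset.range (Reseq.tau a n k), Reseq.S n a (Reseq.g a n s) :=
      Finset.sum_le_sum_of_subset_of_nonneg hsub (fun s _ _ => hAnn _)
    have h2 : ∀ s ∈ Finset.Ico (Reseq.Cc a n (Reseq.g a n (Reseq.tau a n k) - 1))
          (Reseq.Cc a n ((Reseq.g a n (Reseq.tau a n k) - 1) + 1)),
        Reseq.S n a (Reseq.g a n s) = Reseq.S n a (Reseq.g a n (Reseq.tau a n k) - 1) := by
      intro s hs
      simp only [Finset.mem_Ico] at hs
      rw [Reseq.g_eq hs.1 hs.2]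
    rw [Finset.sum_congr rfl h2, Finset.sum_const, Nat.card_Ico, Reseq.Cc_succ] at h1
    have h5 : Reseq.Cc a n (Reseq.g a n (Reseq.tau a n k) - 1)
        + Reseq.c a n (Reseq.g a n (Reseq.tau a n k) - 1)
        - Reseq.Cc a n (Reseq.g a n (Reseq.tau a n k) - 1)
        = Reseq.c a n (Reseq.g a n (Reseq.tau a n k) - 1) := by omega
    rw [h5, nsmul_eq_mul] at h1
    have h3 := Reseq.c_spec hmono hε hεa (Reseq.g a n (Reseq.tau a n k) - 1)
    rw [hjm1] at h3
    have h4 : ((Reseq.g a n (Reseq.tau a n k) - 1 : ℕ) : ℝ) + 1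
        = (Reseq.g a n (Reseq.tau a n k) : ℝ) := by
      have : ((((Reseq.g a n (Reseq.tau a n k) - 1) + 1 : ℕ)) : ℝ)
          = (Reseq.g a n (Reseq.tau a n k) : ℝ) := congrArg Nat.cast hjm1
      push_cast at this
      linarith
    rw [h4] at h3
    linarith
  have hSAj : ((Reseq.g a n (Reseq.tau a n k) : ℝ)) * Reseq.S n a (Reseq.g a n (Reseq.tau a n k))
      ≤ ∑ s ∈ Finset.range (Reseq.tau a n k), Reseq.S n a (Reseq.g a n s) := by
    have hc : (0:ℝ) ≤ (Reseq.g a n (Reseq.tau a n k) : ℝ) := Nat.cast_nonneg _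
    have he : ((Reseq.g a n (Reseq.tau a n k) : ℝ)) * (Reseq.S n a (Reseq.g a n (Reseq.tau a n k)) + 1) + 1
        = ((Reseq.g a n (Reseq.tau a n k) : ℝ)) * Reseq.S n a (Reseq.g a n (Reseq.tau a n k))
          + ((Reseq.g a n (Reseq.tau a n k) : ℝ)) + 1 := by ring
    linarith [hSAlb]
  -- the constant C is eventually dominated
  have hCk : (∑ s ∈ Finset.range (Reseq.Cc a n (max (max J0 J1) 1)),
        |Reseq.S n b (Reseq.g a n s) - α * Reseq.S n a (Reseq.g a n s)|)
      ≤ (δ/4) * ((∑ s ∈ Finset.range (Reseq.tau a n k), Reseq.S n a (Reseq.g a n s))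
        + ∑ i ∈ Finset.Ioc (n (Reseq.g a n (Reseq.tau a n k))) (Reseq.m a n k), a i) := by
    rw [div_lt_iff₀ (by positivity)] at hK0
    have h2 : (K0:ℝ) + 1 ≤ (k:ℝ) := by exact_mod_cast hkK0
    have h3 : (K0:ℝ) * (ε * (δ/4)) ≤ (k:ℝ) * (ε * (δ/4)) :=
      mul_le_mul_of_nonneg_right (by linarith) (by positivity)
    have h4 := mul_le_mul_of_nonneg_left hDk hε'pos.le
    have h5 : (k:ℝ) * (ε * (δ/4)) = (δ/4) * (ε * (k:ℝ)) := by ring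
    linarith
  -- tail estimate for the completed-pass error sum
  have htail : ∑ s ∈ Finset.range (Reseq.tau a n k),
        |Reseq.S n b (Reseq.g a n s) - α * Reseq.S n a (Reseq.g a n s)|
      ≤ (∑ s ∈ Finset.range (Reseq.Cc a n (max (max J0 J1) 1)),
          |Reseq.S n b (Reseq.g a n s) - α * Reseq.S n a (Reseq.g a n s)|)
        + (δ/4) * ∑ s ∈ Finset.range (Reseq.tau a n k), Reseq.S n a (Reseq.g a n s) := by
    rw [Finset.range_eq_Ico, ← Finset.sum_Ico_consecutive _ (Nat.zero_le _) htau]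
    have e1 : ∑ s ∈ Finset.Ico 0 (Reseq.Cc a n (max (max J0 J1) 1)),
        |Reseq.S n b (Reseq.g a n s) - α * Reseq.S n a (Reseq.g a n s)|
        = ∑ s ∈ Finset.range (Reseq.Cc a n (max (max J0 J1) 1)),
        |Reseq.S n b (Reseq.g a n s) - α * Reseq.S n a (Reseq.g a n s)| := by
      rw [Finset.range_eq_Ico]
    rw [e1]
    refine add_le_add le_rfl ?_
    calc ∑ s ∈ Finset.Ico (Reseq.Cc a n (max (max J0 J1) 1)) (Reseq.tau a n k),
          |Reseq.S n b (Reseq.g a n s) - α * Reseq.S n a (Reseq.g a n s)|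
        ≤ ∑ s ∈ Finset.Ico (Reseq.Cc a n (max (max J0 J1) 1)) (Reseq.tau a n k),
          (δ/4) * Reseq.S n a (Reseq.g a n s) := by
          apply Finset.sum_le_sum
          intro s hs
          simp only [Finset.mem_Ico] at hs
          exact hblk _ (Reseq.g_ge hs.1)
      _ = (δ/4) * ∑ s ∈ Finset.Ico (Reseq.Cc a n (max (max J0 J1) 1)) (Reseq.tau a n k),
          Reseq.S n a (Reseq.g a n s) := (Finset.mul_sum _ _ _).symm
      _ ≤ (δ/4) * ∑ s ∈ Finset.Ico 0 (Reseq.tau a n k), Reseq.S n a (Reseq.g a n s) := by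
          apply mul_le_mul_of_nonneg_left _ hε'pos.le
          apply Finset.sum_le_sum_of_subset_of_nonneg
          · intro s hs
            simp only [Finset.mem_Ico] at hs ⊢
            omega
          · exact fun s _ _ => hAnn _
  have hNB : |(∑ s ∈ Finset.range (Reseq.tau a n k), Reseq.S n b (Reseq.g a n s))
        - α * ∑ s ∈ Finset.range (Reseq.tau a n k), Reseq.S n a (Reseq.g a n s)|
      ≤ (∑ s ∈ Finset.range (Reseq.Cc a n (max (max J0 J1) 1)),
          |Reseq.S n b (Reseq.g a n s) - α * Reseq.S n a (Reseq.g a n s)|)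
        + (δ/4) * ∑ s ∈ Finset.range (Reseq.tau a n k), Reseq.S n a (Reseq.g a n s) := by
    have e0 : (∑ s ∈ Finset.range (Reseq.tau a n k), Reseq.S n b (Reseq.g a n s))
        - α * ∑ s ∈ Finset.range (Reseq.tau a n k), Reseq.S n a (Reseq.g a n s)
        = ∑ s ∈ Finset.range (Reseq.tau a n k),
          (Reseq.S n b (Reseq.g a n s) - α * Reseq.S n a (Reseq.g a n s)) := by
      rw [Finset.sum_sub_distrib, Finset.mul_sum]
    rw [e0]
    exact le_trans (Finset.abs_sum_le_sum_abs _ _) htail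
  -- partial-block estimate
  have hPbα : |(∑ i ∈ Finset.Ioc (n (Reseq.g a n (Reseq.tau a n k))) (Reseq.m a n k), b i)
        - α * ∑ i ∈ Finset.Ioc (n (Reseq.g a n (Reseq.tau a n k))) (Reseq.m a n k), a i|
      ≤ (δ/4) * ((∑ s ∈ Finset.range (Reseq.tau a n k), Reseq.S n a (Reseq.g a n s))
        + ∑ i ∈ Finset.Ioc (n (Reseq.g a n (Reseq.tau a n k))) (Reseq.m a n k), a i) := by
    have e1 : |(∑ i ∈ Finset.Ioc (n (Reseq.g a n (Reseq.tau a n k))) (Reseq.m a n k), b i)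
        - α * ∑ i ∈ Finset.Ioc (n (Reseq.g a n (Reseq.tau a n k))) (Reseq.m a n k), a i|
        ≤ (M + |α|) * ∑ i ∈ Finset.Ioc (n (Reseq.g a n (Reseq.tau a n k))) (Reseq.m a n k), a i := by
      have t2 : |α * ∑ i ∈ Finset.Ioc (n (Reseq.g a n (Reseq.tau a n k))) (Reseq.m a n k), a i|
          = |α| * ∑ i ∈ Finset.Ioc (n (Reseq.g a n (Reseq.tau a n k))) (Reseq.m a n k), a i := by
        rw [abs_mul, abs_of_nonneg hPa0]
      calc |(∑ i ∈ Finset.Ioc (n (Reseq.g a n (Reseq.tau a n k))) (Reseq.m a n k), b i)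
            - α * ∑ i ∈ Finset.Ioc (n (Reseq.g a n (Reseq.tau a n k))) (Reseq.m a n k), a i|
          ≤ |∑ i ∈ Finset.Ioc (n (Reseq.g a n (Reseq.tau a n k))) (Reseq.m a n k), b i|
            + |α * ∑ i ∈ Finset.Ioc (n (Reseq.g a n (Reseq.tau a n k))) (Reseq.m a n k), a i| :=
            abs_sub _ _
        _ ≤ M * (∑ i ∈ Finset.Ioc (n (Reseq.g a n (Reseq.tau a n k))) (Reseq.m a n k), a i)
            + |α| * ∑ i ∈ Finset.Ioc (n (Reseq.g a n (Reseq.tau a n k))) (Reseq.m a n k), a i := by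
            rw [t2] at *
            linarith [hPb]
        _ = (M + |α|) * ∑ i ∈ Finset.Ioc (n (Reseq.g a n (Reseq.tau a n k))) (Reseq.m a n k), a i := by
            ring
    have e2 : (M + |α|) * (∑ i ∈ Finset.Ioc (n (Reseq.g a n (Reseq.tau a n k))) (Reseq.m a n k), a i)
        ≤ (M + |α|) * Reseq.S n a (Reseq.g a n (Reseq.tau a n k)) :=
      mul_le_mul_of_nonneg_left hPaA (by positivity)
    have e3 : (M + |α|) * Reseq.S n a (Reseq.g a n (Reseq.tau a n k))
        ≤ (δ/4) * ((Reseq.g a n (Reseq.tau a n k) : ℝ)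
          * Reseq.S n a (Reseq.g a n (Reseq.tau a n k))) := by
      have t3 : (M + |α|) ≤ (δ/4) * (Reseq.g a n (Reseq.tau a n k) : ℝ) := by
        have t4 : ((max (max J0 J1) 1 : ℕ) : ℝ) ≤ (Reseq.g a n (Reseq.tau a n k) : ℝ) := by
          exact_mod_cast hjJ
        have t5 := mul_le_mul_of_nonneg_left t4 hε'pos.le
        linarith
      have t6 := mul_le_mul_of_nonneg_right t3 (hAnn (Reseq.g a n (Reseq.tau a n k)))
      have t7 : (δ/4) * (Reseq.g a n (Reseq.tau a n k) : ℝ)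
            * Reseq.S n a (Reseq.g a n (Reseq.tau a n k))
          = (δ/4) * ((Reseq.g a n (Reseq.tau a n k) : ℝ)
            * Reseq.S n a (Reseq.g a n (Reseq.tau a n k))) := by ring
      linarith
    have e4 : (δ/4) * ((Reseq.g a n (Reseq.tau a n k) : ℝ)
          * Reseq.S n a (Reseq.g a n (Reseq.tau a n k)))
        ≤ (δ/4) * ∑ s ∈ Finset.range (Reseq.tau a n k), Reseq.S n a (Reseq.g a n s) :=
      mul_le_mul_of_nonneg_left hSAj hε'pos.le
    have e5 : (δ/4) * ∑ s ∈ Finset.range (Reseq.tau a n k), Reseq.S n a (Reseq.g a n s)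
        ≤ (δ/4) * ((∑ s ∈ Finset.range (Reseq.tau a n k), Reseq.S n a (Reseq.g a n s))
          + ∑ i ∈ Finset.Ioc (n (Reseq.g a n (Reseq.tau a n k))) (Reseq.m a n k), a i) :=
      mul_le_mul_of_nonneg_left (by linarith) hε'pos.le
    linarith
  -- conclusion
  rw [Real.dist_eq, hNd, hDd]
  have key : |((∑ s ∈ Finset.range (Reseq.tau a n k), Reseq.S n b (Reseq.g a n s))
        + ∑ i ∈ Finset.Ioc (n (Reseq.g a n (Reseq.tau a n k))) (Reseq.m a n k), b i)
      - α * ((∑ s ∈ Finset.range (Reseq.tau a n k), Reseq.S n a (Reseq.g a n s))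
        + ∑ i ∈ Finset.Ioc (n (Reseq.g a n (Reseq.tau a n k))) (Reseq.m a n k), a i)|
      ≤ (3*(δ/4)) * ((∑ s ∈ Finset.range (Reseq.tau a n k), Reseq.S n a (Reseq.g a n s))
        + ∑ i ∈ Finset.Ioc (n (Reseq.g a n (Reseq.tau a n k))) (Reseq.m a n k), a i) := by
    have t1 : ((∑ s ∈ Finset.range (Reseq.tau a n k), Reseq.S n b (Reseq.g a n s))
        + ∑ i ∈ Finset.Ioc (n (Reseq.g a n (Reseq.tau a n k))) (Reseq.m a n k), b i)
      - α * ((∑ s ∈ Finset.range (Reseq.tau a n k), Reseq.S n a (Reseq.g a n s))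
        + ∑ i ∈ Finset.Ioc (n (Reseq.g a n (Reseq.tau a n k))) (Reseq.m a n k), a i)
      = ((∑ s ∈ Finset.range (Reseq.tau a n k), Reseq.S n b (Reseq.g a n s))
        - α * ∑ s ∈ Finset.range (Reseq.tau a n k), Reseq.S n a (Reseq.g a n s))
        + ((∑ i ∈ Finset.Ioc (n (Reseq.g a n (Reseq.tau a n k))) (Reseq.m a n k), b i)
        - α * ∑ i ∈ Finset.Ioc (n (Reseq.g a n (Reseq.tau a n k))) (Reseq.m a n k), a i) := by
      ring
    rw [t1]
    have t2 := abs_add_le ((∑ s ∈ Finset.range (Reseq.tau a n k), Reseq.S n b (Reseq.g a n s))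
        - α * ∑ s ∈ Finset.range (Reseq.tau a n k), Reseq.S n a (Reseq.g a n s))
      ((∑ i ∈ Finset.Ioc (n (Reseq.g a n (Reseq.tau a n k))) (Reseq.m a n k), b i)
        - α * ∑ i ∈ Finset.Ioc (n (Reseq.g a n (Reseq.tau a n k))) (Reseq.m a n k), a i)
    have t3 : (δ/4) * (∑ s ∈ Finset.range (Reseq.tau a n k), Reseq.S n a (Reseq.g a n s))
        ≤ (δ/4) * ((∑ s ∈ Finset.range (Reseq.tau a n k), Reseq.S n a (Reseq.g a n s))
          + ∑ i ∈ Finset.Ioc (n (Reseq.g a n (Reseq.tau a n k))) (Reseq.m a n k), a i) :=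
      mul_le_mul_of_nonneg_left (by linarith) hε'pos.le
    linarith [hNB, hPbα, hCk]
  have heq : ((∑ s ∈ Finset.range (Reseq.tau a n k), Reseq.S n b (Reseq.g a n s))
        + ∑ i ∈ Finset.Ioc (n (Reseq.g a n (Reseq.tau a n k))) (Reseq.m a n k), b i)
      / ((∑ s ∈ Finset.range (Reseq.tau a n k), Reseq.S n a (Reseq.g a n s))
        + ∑ i ∈ Finset.Ioc (n (Reseq.g a n (Reseq.tau a n k))) (Reseq.m a n k), a i) - α
      = (((∑ s ∈ Finset.range (Reseq.tau a n k), Reseq.S n b (Reseq.g a n s))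
        + ∑ i ∈ Finset.Ioc (n (Reseq.g a n (Reseq.tau a n k))) (Reseq.m a n k), b i)
      - α * ((∑ s ∈ Finset.range (Reseq.tau a n k), Reseq.S n a (Reseq.g a n s))
        + ∑ i ∈ Finset.Ioc (n (Reseq.g a n (Reseq.tau a n k))) (Reseq.m a n k), a i))
      / ((∑ s ∈ Finset.range (Reseq.tau a n k), Reseq.S n a (Reseq.g a n s))
        + ∑ i ∈ Finset.Ioc (n (Reseq.g a n (Reseq.tau a n k))) (Reseq.m a n k), a i) := by
    field_simp
  rw [heq, abs_div, abs_of_pos hDpos, div_lt_iff₀ hDpos]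
  exact lt_of_le_of_lt key (mul_lt_mul_of_pos_right (by linarith) hDpos)
end

section
/- Define the sequence (m_k) as follows: set d_1 := n_1 and d_k := n_k − n_{k-1} for k ≥ 2, choose positive integers (r_k) such that lim_{k→∞} (a_{n_k+1} + ⋯ + a_{n_{k+1}})/(r_k · (a_{n_{k-1}+1} + ⋯ + a_{n_k})) = 0, set n_0 := 0, and define m_{r_1 d_1 + ⋯ + r_{l-1} d_{l-1} + s d_l + p} := n_{l-1} + p for l ≥ 1, 0 ≤ s ≤ r_l − 1, 1 ≤ p ≤ d_l. Then this (m_k) satisfies: for any bounded-ratio sequence (b_n) (i.e. sup_n |b_n|/a_n < ∞) with lim_{k→∞} (b_{n_{k-1}+1}+⋯+b_{n_k})/(a_{n_{k-1}+1}+⋯+a_{n_k}) = α, one has lim_{k→∞} (b_{m_1}+⋯+b_{m_k})/(a_{m_1}+⋯+a_{m_k}) = α. -/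
/-! Write `A j`, `B j` for the block sums of `a`, `b`. An initial segment of `m` consists of all
repetitions of the blocks before some block `j`, then `s` full copies of block `j`, then a piece of
one more copy of it. Hence its `b`-sum minus `α` times its `a`-sum is
`∑ i < j, c i (B i - α A i) + s (B j - α A j)` plus the contribution of that piece. The first two
terms are small against the `a`-sum because `B i / A i → α`, up to a constant coming from the
finitely many early blocks, and the constant is absorbed since `a` is bounded below. The piece
contributes at most `(M + |α|) A j`, and the choice of `c` makes this negligible against the
`a`-sum `c (j - 1) A (j - 1)` of the repetitions of the previous block. -/

open Filter Topology Finset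

/-- Blocks are indexed from `0`: block `j` is `(n j, n (j + 1)]`, the paper's block `j + 1`. -/
def blockSum (n : ℕ → ℕ) (f : ℕ → ℝ) (j : ℕ) : ℝ := ∑ i ∈ Ioc (n j) (n (j + 1)), f i

def blockStart (n c : ℕ → ℕ) (j : ℕ) : ℕ := ∑ i ∈ range j, c i * (n (i + 1) - n i)

/-- `m` runs through block `0` `c 0` times, then through block `1` `c 1` times, and so on. -/
def IsBlockRepetition (n c m : ℕ → ℕ) : Prop :=
  ∀ j s p, s < c j → 1 ≤ p → p ≤ n (j + 1) - n j →
    m (blockStart n c j + s * (n (j + 1) - n j) + p) = n j + p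

lemma sum_Icc_one_eq_sum_range {M : Type*} [AddCommMonoid M] (f : ℕ → M) (j : ℕ) :
    ∑ i ∈ Icc 1 j, f i = ∑ i ∈ range j, f (i + 1) := by
  rw [← Ico_add_one_right_eq_Icc, range_eq_Ico, sum_Ico_add' f 0 j 1, zero_add]

lemma sum_Ioc_comp_eq_of_forall_add {M : Type*} [AddCommMonoid M] {f : ℕ → M} {m : ℕ → ℕ}
    {u v p : ℕ}
    (h : ∀ q, 1 ≤ q → q ≤ p → m (u + q) = v + q) :
    ∑ i ∈ Ioc u (u + p), f (m i) = ∑ i ∈ Ioc v (v + p), f i := by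
  induction p with
  | zero => simp
  | succ p ih =>
    have hlast : m (u + p + 1) = v + p + 1 := h (p + 1) (by omega) le_rfl
    rw [← add_assoc, ← add_assoc, sum_Ioc_succ_top (by omega), sum_Ioc_succ_top (by omega),
      ih fun q hq hqp => h q hq (by omega), hlast]

section BlockRepetition

variable {n c m : ℕ → ℕ}

lemma blockStart_succ (n c : ℕ → ℕ) (j : ℕ) :
    blockStart n c (j + 1) = blockStart n c j + c j * (n (j + 1) - n j) :=
  sum_range_succ _ _

lemma blockStart_mono : Monotone (blockStart n c) := fun _ _ h =>
  sum_le_sum_of_subset (range_mono h)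

lemma le_blockStart (hn : StrictMono n) (hc : ∀ j, 1 ≤ c j) (j : ℕ) : j ≤ blockStart n c j := by
  induction j with
  | zero => exact Nat.zero_le _
  | succ j ih =>
    have hd : 1 ≤ n (j + 1) - n j := by have := hn (show j < j + 1 by omega); omega
    have := Nat.mul_le_mul (hc j) hd
    rw [blockStart_succ]
    omega

lemma exists_eq_blockStart_add (hn : StrictMono n) (hc : ∀ j, 1 ≤ c j) {k : ℕ} (hk : 1 ≤ k) :
    ∃ j s p, s < c j ∧ 1 ≤ p ∧ p ≤ n (j + 1) - n j ∧
      k = blockStart n c j + s * (n (j + 1) - n j) + p := by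
  classical
  have hex : ∃ j, k ≤ blockStart n c (j + 1) := ⟨k, (le_blockStart hn hc _).trans' k.le_succ⟩
  set j := Nat.find hex
  have hkj : k ≤ blockStart n c j + c j * (n (j + 1) - n j) :=
    blockStart_succ n c j ▸ Nat.find_spec hex
  have hjk : blockStart n c j < k := by
    rcases hj : j with _ | i
    · exact hk
    · exact not_le.1 (Nat.find_min hex (show i < j by omega))
  have hd : 0 < n (j + 1) - n j := by have := hn (show j < j + 1 by omega); omega
  set q := k - blockStart n c j - 1
  refine ⟨j, q / (n (j + 1) - n j), q % (n (j + 1) - n j) + 1, ?_, by omega,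
    Nat.mod_lt q hd, ?_⟩
  · rw [Nat.div_lt_iff_lt_mul hd]
    omega
  · have := Nat.div_add_mod' q (n (j + 1) - n j)
    omega

lemma one_le_of_isBlockRepetition (hn : StrictMono n) (hc : ∀ j, 1 ≤ c j)
    (hm : IsBlockRepetition n c m) {i : ℕ} (hi : 1 ≤ i) : 1 ≤ m i := by
  obtain ⟨j, s, p, hs, hp, hpd, rfl⟩ := exists_eq_blockStart_add hn hc hi
  rw [hm j s p hs hp hpd]
  omega

variable (hn : Monotone n) (hm : IsBlockRepetition n c m) (f : ℕ → ℝ)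
include hn hm

lemma sum_comp_Ioc_blockStart_add_mul {j s : ℕ} (hs : s ≤ c j) :
    ∑ i ∈ Ioc (blockStart n c j) (blockStart n c j + s * (n (j + 1) - n j)), f (m i) =
      s * blockSum n f j := by
  induction s with
  | zero => simp
  | succ s ih =>
    have hnj : n j + (n (j + 1) - n j) = n (j + 1) := by
      have := hn (show j ≤ j + 1 by omega); omega
    rw [add_one_mul, ← add_assoc,
      ← sum_Ioc_consecutive _ (Nat.le_add_right _ _) (Nat.le_add_right _ _), ih (by omega),
      sum_Ioc_comp_eq_of_forall_add fun q hq hqd => hm j s q (by omega) hq hqd, hnj,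
      Nat.cast_succ, add_one_mul]
    rfl

lemma sum_comp_Ioc_zero_blockStart (j : ℕ) :
    ∑ i ∈ Ioc 0 (blockStart n c j), f (m i) = ∑ i ∈ range j, c i * blockSum n f i := by
  induction j with
  | zero => simp [blockStart]
  | succ j ih =>
    rw [← sum_Ioc_consecutive _ (Nat.zero_le _) (blockStart_mono j.le_succ), ih,
      blockStart_succ, sum_comp_Ioc_blockStart_add_mul hn hm f le_rfl, sum_range_succ]

lemma sum_comp_Icc_one_blockStart_add {j s p : ℕ} (hs : s < c j) (hp : p ≤ n (j + 1) - n j) :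
    ∑ i ∈ Icc 1 (blockStart n c j + s * (n (j + 1) - n j) + p), f (m i) =
      ∑ i ∈ range j, c i * blockSum n f i + s * blockSum n f j +
        ∑ i ∈ Ioc (n j) (n j + p), f i := by
  rw [show Icc 1 _ = Ioc 0 _ from Icc_add_one_left_eq_Ioc 0 _,
    ← sum_Ioc_consecutive _ (Nat.zero_le _) (Nat.le_add_right _ p),
    ← sum_Ioc_consecutive _ (Nat.zero_le _) (Nat.le_add_right _ _),
    sum_comp_Ioc_zero_blockStart hn hm, sum_comp_Ioc_blockStart_add_mul hn hm f hs.le,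
    sum_Ioc_comp_eq_of_forall_add fun q hq hqp => hm j s q hs hq (hqp.trans hp)]

end BlockRepetition

lemma blockSum_pos {n : ℕ → ℕ} (hn : StrictMono n) {a : ℕ → ℝ} (ha : ∀ i, 1 ≤ i → 0 < a i)
    (j : ℕ) : 0 < blockSum n a j :=
  sum_pos (fun i hi => ha i (by have := (mem_Ioc.1 hi).1; omega))
    (nonempty_Ioc.2 (hn (show j < j + 1 by omega)))

lemma abs_sum_Ioc_le_mul_blockSum {n : ℕ → ℕ} (hn : Monotone n) {a g : ℕ → ℝ} {K : ℝ}
    (hg : ∀ i, 1 ≤ i → |g i| ≤ K * a i) {j p : ℕ} (hp : p ≤ n (j + 1) - n j) :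
    |∑ i ∈ Ioc (n j) (n j + p), g i| ≤ K * blockSum n a j := by
  have hpos : ∀ i ∈ Ioc (n j) (n (j + 1)), 1 ≤ i := fun i hi => by
    have := (mem_Ioc.1 hi).1; omega
  have hsub : Ioc (n j) (n j + p) ⊆ Ioc (n j) (n (j + 1)) :=
    Ioc_subset_Ioc_right (by have := hn (show j ≤ j + 1 by omega); omega)
  calc |∑ i ∈ Ioc (n j) (n j + p), g i| ≤ ∑ i ∈ Ioc (n j) (n j + p), |g i| :=
        abs_sum_le_sum_abs _ _
    _ ≤ ∑ i ∈ Ioc (n j) (n j + p), K * a i := sum_le_sum fun i hi => hg i (hpos i (hsub hi))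
    _ ≤ ∑ i ∈ Ioc (n j) (n (j + 1)), K * a i := sum_le_sum_of_subset_of_nonneg hsub
        fun i hi _ => (abs_nonneg _).trans (hg i (hpos i hi))
    _ = K * blockSum n a j := (mul_sum _ _ _).symm

lemma abs_sum_range_le_sum_range_abs_add {x w : ℕ → ℝ} {ε : ℝ} {J : ℕ}
    (hw : ∀ i, 0 ≤ ε * w i) (hx : ∀ i, J ≤ i → |x i| ≤ ε * w i) (j : ℕ) :
    |∑ i ∈ range j, x i| ≤ ∑ i ∈ range J, |x i| + ε * ∑ i ∈ range j, w i := by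
  rw [mul_sum]
  refine (abs_sum_le_sum_abs _ _).trans ?_
  rcases le_total j J with h | h
  · exact le_add_of_le_of_nonneg
      (sum_le_sum_of_subset_of_nonneg (range_mono h) fun i _ _ => abs_nonneg _)
      (sum_nonneg fun i _ => hw i)
  · rw [← sum_range_add_sum_Ico _ h, ← sum_range_add_sum_Ico (fun i => ε * w i) h]
    exact add_le_add le_rfl (le_add_of_nonneg_of_le (sum_nonneg fun i _ => hw i)
      (sum_le_sum fun i hi => hx i (mem_Ico.1 hi).1))

lemma exists_tendsto_div_natCast_mul_nhds_zero (x y : ℕ → ℝ) (hx : ∀ k, 0 ≤ x k)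
    (hy : ∀ k, 0 < y k) :
    ∃ r : ℕ → ℕ, (∀ k, 1 ≤ r k) ∧ Tendsto (fun k => x k / (r k * y k)) atTop (𝓝 0) := by
  refine ⟨fun k => ⌈(k + 1) * x k / y k⌉₊ + 1, fun k => le_add_self, ?_⟩
  have hry : ∀ k, 0 < ((⌈(k + 1) * x k / y k⌉₊ + 1 : ℕ) : ℝ) * y k := fun k =>
    mul_pos (by positivity) (hy k)
  refine squeeze_zero (fun k => div_nonneg (hx k) (hry k).le) (fun k => ?_)
    tendsto_one_div_add_atTop_nhds_zero_nat
  have hr : (k + 1) * x k / y k ≤ ⌈(k + 1) * x k / y k⌉₊ + 1 :=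
    (Nat.le_ceil _).trans (le_add_of_nonneg_right zero_le_one)
  rw [div_le_iff₀ (hy k)] at hr
  rw [div_le_div_iff₀ (hry k) (by positivity), one_mul]
  push_cast
  linarith

lemma isLittleO_of_forall_abs_le_const_add {ι : Type*} {l : Filter ι} {u v : ι → ℝ}
    (hv : Tendsto v l atTop) (h : ∀ ε > 0, ∃ C, ∀ᶠ k in l, |u k| ≤ C + ε * v k) :
    u =o[l] v := by
  refine Asymptotics.IsLittleO.of_bound fun ε hε => ?_
  obtain ⟨C, hC⟩ := h (ε / 2) (half_pos hε)
  filter_upwards [hC, hv.eventually_ge_atTop (2 * C / ε), hv.eventually_ge_atTop 0]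
    with k hk hvC hv0
  rw [Real.norm_eq_abs, Real.norm_eq_abs, abs_of_nonneg hv0]
  rw [div_le_iff₀ hε] at hvC
  linarith

lemma tendsto_div_of_isLittleO_sub {ι 𝕜 : Type*} [NormedField 𝕜] {l : Filter ι} {u v : ι → 𝕜}
    {α : 𝕜} (h : (fun k => u k - α * v k) =o[l] v) (hv : ∀ᶠ k in l, v k ≠ 0) :
    Tendsto (fun k => u k / v k) l (𝓝 α) := by
  rw [← tendsto_sub_nhds_zero_iff]
  refine h.tendsto_div_nhds_zero.congr' ?_
  filter_upwards [hv] with k hk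
  field_simp

section Resequencing

variable {n c m : ℕ → ℕ} (hn : StrictMono n) (hc : ∀ j, 1 ≤ c j) (hm : IsBlockRepetition n c m)
include hn hc hm

lemma abs_sum_comp_le_of_isBlockRepetition {a g : ℕ → ℝ} {K ε : ℝ} {J : ℕ} (hε : 0 ≤ ε)
    (ha : ∀ i, 1 ≤ i → 0 ≤ a i) (hg : ∀ i, 1 ≤ i → |g i| ≤ K * a i)
    (hG : ∀ j, J ≤ j → |blockSum n g j| ≤ ε * blockSum n a j)
    (hA : ∀ j, J ≤ j → K * blockSum n a (j + 1) ≤ ε * (c j * blockSum n a j))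
    {k : ℕ} (hk : blockStart n c (J + 1) < k) :
    |∑ i ∈ Icc 1 k, g (m i)| ≤
      ∑ j ∈ range J, |c j * blockSum n g j| + 2 * ε * ∑ i ∈ Icc 1 k, a (m i) := by
  obtain ⟨j, s, p, hs, hp, hpd, rfl⟩ := exists_eq_blockStart_add hn hc (by omega : 1 ≤ k)
  have hkj : blockStart n c j + s * (n (j + 1) - n j) + p ≤ blockStart n c (j + 1) := by
    have hlast := Nat.mul_le_mul_right (n (j + 1) - n j) (Nat.succ_le_of_lt hs)
    rw [Nat.succ_mul] at hlast
    rw [blockStart_succ]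
    omega
  have hJj : J + 1 < j + 1 := blockStart_mono.reflect_lt (hk.trans_le hkj)
  obtain ⟨j, rfl⟩ : ∃ i, j = i + 1 := ⟨j - 1, by omega⟩
  have hA0 : ∀ i, 0 ≤ blockSum n a i := fun i => sum_nonneg fun l hl => ha l (by
    have := (mem_Ioc.1 hl).1; omega)
  rw [sum_comp_Icc_one_blockStart_add hn.monotone hm _ hs hpd,
    sum_comp_Icc_one_blockStart_add hn.monotone hm _ hs hpd]
  set X := ∑ i ∈ range (j + 1), (c i : ℝ) * blockSum n a i
  have hcA : ∀ i, 0 ≤ ε * (c i * blockSum n a i) := fun i => by have := hA0 i; positivity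
  have hfull := abs_sum_range_le_sum_range_abs_add (x := fun i => c i * blockSum n g i) hcA
    (fun i hi => by
      rw [abs_mul, Nat.abs_cast, mul_left_comm]
      exact mul_le_mul_of_nonneg_left (hG i hi) (Nat.cast_nonneg _)) (j + 1)
  have hcopies : |s * blockSum n g (j + 1)| ≤ ε * (s * blockSum n a (j + 1)) := by
    rw [abs_mul, Nat.abs_cast, mul_left_comm]
    exact mul_le_mul_of_nonneg_left (hG _ (by omega)) (Nat.cast_nonneg _)
  have hpartial : |∑ i ∈ Ioc (n (j + 1)) (n (j + 1) + p), g i| ≤ ε * X :=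
    calc _ ≤ K * blockSum n a (j + 1) := abs_sum_Ioc_le_mul_blockSum hn.monotone hg hpd
      _ ≤ ε * (c j * blockSum n a j) := hA j (by omega)
      _ ≤ ε * X := mul_le_mul_of_nonneg_left
          (single_le_sum (f := fun i => (c i : ℝ) * blockSum n a i)
            (fun i _ => by have := hA0 i; positivity) (self_mem_range_succ j)) hε
  have hPa : 0 ≤ ε * ∑ i ∈ Ioc (n (j + 1)) (n (j + 1) + p), a i :=
    mul_nonneg hε (sum_nonneg fun i hi => ha i (by have := (mem_Ioc.1 hi).1; omega))
  have hsA : 0 ≤ ε * (s * blockSum n a (j + 1)) := by have := hA0 (j + 1); positivity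
  calc _ ≤ _ := abs_add_three _ _ _
    _ ≤ _ := add_le_add_three hfull hcopies hpartial
    _ ≤ _ := by rw [mul_add, mul_add]; linarith

theorem tendsto_sum_comp_div_sum_comp_of_isBlockRepetition {a b : ℕ → ℝ} {α : ℝ}
    (ha : ∃ ε > 0, ∀ i, 1 ≤ i → ε ≤ a i) (hb : ∃ M, ∀ i, 1 ≤ i → |b i| ≤ M * a i)
    (hcA : Tendsto (fun j => blockSum n a (j + 1) / (c j * blockSum n a j)) atTop (𝓝 0))
    (hab : Tendsto (fun j => blockSum n b j / blockSum n a j) atTop (𝓝 α)) :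
    Tendsto (fun k => (∑ i ∈ Icc 1 k, b (m i)) / ∑ i ∈ Icc 1 k, a (m i)) atTop (𝓝 α) := by
  obtain ⟨ε₀, hε₀, ha⟩ := ha
  obtain ⟨M, hb⟩ := hb
  have ha0 : ∀ i, 1 ≤ i → 0 < a i := fun i hi => hε₀.trans_le (ha i hi)
  have hA : ∀ j, 0 < blockSum n a j := blockSum_pos hn ha0
  set g := fun i => b i - α * a i
  have hg : ∀ i, 1 ≤ i → |g i| ≤ (|M| + |α|) * a i := fun i hi =>
    calc |b i - α * a i| ≤ |b i| + |α| * a i := by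
          simpa [abs_mul, abs_of_pos (ha0 i hi)] using abs_sub (b i) (α * a i)
      _ ≤ (|M| + |α|) * a i := by
          nlinarith [hb i hi, le_abs_self M, ha0 i hi]
  have hG : Tendsto (fun j => blockSum n g j / blockSum n a j) atTop (𝓝 0) := by
    have hGA : ∀ j, blockSum n g j / blockSum n a j = blockSum n b j / blockSum n a j - α :=
      fun j => by
        rw [show blockSum n g j = blockSum n b j - α * blockSum n a j by
            simp only [g, blockSum, sum_sub_distrib, mul_sum],
          sub_div, mul_div_assoc, div_self (hA j).ne', mul_one]
    simpa only [hGA, sub_self] using hab.sub_const α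
  have hSa : Tendsto (fun k => ∑ i ∈ Icc 1 k, a (m i)) atTop atTop := by
    refine tendsto_atTop_mono (fun k => ?_) (tendsto_natCast_atTop_atTop.atTop_mul_const hε₀)
    simpa using card_nsmul_le_sum (Icc 1 k) _ ε₀
      fun i hi => ha _ (one_le_of_isBlockRepetition hn hc hm (mem_Icc.1 hi).1)
  have hSg : ∀ k, ∑ i ∈ Icc 1 k, g (m i) =
      ∑ i ∈ Icc 1 k, b (m i) - α * ∑ i ∈ Icc 1 k, a (m i) := fun k => by
    simp only [g, sum_sub_distrib, mul_sum]
  refine tendsto_div_of_isLittleO_sub ?_ ((hSa.eventually_gt_atTop 0).mono fun k hk => hk.ne')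
  simp only [← hSg]
  refine isLittleO_of_forall_abs_le_const_add hSa fun ε hε => ?_
  have hGε : ∀ᶠ j in atTop, |blockSum n g j| ≤ ε / 2 * blockSum n a j := by
    filter_upwards [hG.abs.eventually_lt_const (show |(0 : ℝ)| < ε / 2 by simpa using hε)] with j hj
    rw [abs_div, abs_of_pos (hA j), div_lt_iff₀ (hA j)] at hj
    exact hj.le
  have hAε : ∀ᶠ j in atTop,
      (|M| + |α|) * blockSum n a (j + 1) ≤ ε / 2 * (c j * blockSum n a j) := by
    filter_upwards [(hcA.const_mul (|M| + |α|)).eventually_lt_const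
      (show (|M| + |α|) * 0 < ε / 2 by simpa using hε)] with j hj
    rw [← mul_div_assoc, div_lt_iff₀ (mul_pos (by exact_mod_cast hc j) (hA j))] at hj
    exact hj.le
  obtain ⟨J, hJ⟩ := eventually_atTop.1 (hGε.and hAε)
  refine ⟨∑ j ∈ range J, |(c j : ℝ) * blockSum n g j|,
    eventually_atTop.2 ⟨blockStart n c (J + 1) + 1, fun k hk => ?_⟩⟩
  refine (abs_sum_comp_le_of_isBlockRepetition hn hc hm (half_pos hε).le (fun i hi => (ha0 i hi).le)
    hg (fun j hj => (hJ j hj).1) (fun j hj => (hJ j hj).2) hk).trans_eq ?_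
  ring

end Resequencing

theorem stmt_1_general (a : ℕ → ℝ) (ha : ∃ ε > (0:ℝ), ∀ n, 1 ≤ n → ε ≤ a n)
    (n : ℕ → ℕ) (hmono : StrictMono n) :
    (∃ r : ℕ → ℕ, (∀ k, 1 ≤ r k) ∧
        Tendsto (fun k => (∑ i ∈ Finset.Ioc (n (k + 1)) (n (k + 2)), a i) /
          ((r (k + 1) : ℝ) * ∑ i ∈ Finset.Ioc (n k) (n (k + 1)), a i)) atTop (nhds 0)) ∧
    ∀ r : ℕ → ℕ, (∀ k, 1 ≤ r k) →
      Tendsto (fun k => (∑ i ∈ Finset.Ioc (n (k + 1)) (n (k + 2)), a i) /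
          ((r (k + 1) : ℝ) * ∑ i ∈ Finset.Ioc (n k) (n (k + 1)), a i)) atTop (nhds 0) →
      ∀ m : ℕ → ℕ,
        (∀ l, 1 ≤ l → ∀ s, s < r l → ∀ p, 1 ≤ p → p ≤ n l - n (l - 1) →
          m ((∑ j ∈ Finset.Icc 1 (l - 1), r j * (n j - n (j - 1))) + s * (n l - n (l - 1)) + p)
            = n (l - 1) + p) →
        ∀ (b : ℕ → ℝ) (α : ℝ), (∃ M : ℝ, ∀ i, 1 ≤ i → |b i| ≤ M * a i) →
          Tendsto (fun k => (∑ i ∈ Finset.Ioc (n k) (n (k + 1)), b i) /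
              (∑ i ∈ Finset.Ioc (n k) (n (k + 1)), a i)) atTop (nhds α) →
          Tendsto (fun k => (∑ i ∈ Finset.Icc 1 k, b (m i)) /
              (∑ i ∈ Finset.Icc 1 k, a (m i))) atTop (nhds α) := by
  have hA : ∀ j, 0 < blockSum n a j := by
    obtain ⟨ε, hε, ha⟩ := ha
    exact blockSum_pos hmono fun i hi => hε.trans_le (ha i hi)
  refine ⟨?_, fun r hr hrA m hm b α hb hab => ?_⟩
  · obtain ⟨r, hr, hrA⟩ := exists_tendsto_div_natCast_mul_nhds_zero
      (fun k => blockSum n a (k + 1)) (blockSum n a) (fun k => (hA _).le) hA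
    exact ⟨fun j => r (j - 1), fun j => hr _, hrA⟩
  · have hm' : IsBlockRepetition n (fun j => r (j + 1)) m := fun j s p hs hp hpd => by
      have := hm (j + 1) (by omega) s hs p hp hpd
      simp only [Nat.add_sub_cancel, sum_Icc_one_eq_sum_range] at this
      exact this
    exact tendsto_sum_comp_div_sum_comp_of_isBlockRepetition hmono (fun j => hr _) hm' ha hb hrA hab

/-- The explicit construction in the proof of the resequencing lemma:
`d l := n l - n (l-1)`, `r` is a sequence of positive integers such that
`(a_{n_k+1} + ⋯ + a_{n_{k+1}}) / (r k · (a_{n_{k-1}+1} + ⋯ + a_{n_k})) → 0`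
(such `r` exists), and `m` is defined blockwise by
`m (r₁d₁ + ⋯ + r_{l-1}d_{l-1} + s·d_l + p) = n_{l-1} + p`.
Then `m` has the resequencing property. Here `n 0 = 0` encodes `n₀ := 0`. -/
theorem stmt_1 (a : ℕ → ℝ) (ha : ∃ ε > (0:ℝ), ∀ n, 1 ≤ n → ε ≤ a n)
    (n : ℕ → ℕ) (hn0 : n 0 = 0) (hmono : StrictMono n) :
    (∃ r : ℕ → ℕ, (∀ k, 1 ≤ r k) ∧
        Tendsto (fun k => (∑ i ∈ Finset.Ioc (n (k + 1)) (n (k + 2)), a i) /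
          ((r (k + 1) : ℝ) * ∑ i ∈ Finset.Ioc (n k) (n (k + 1)), a i)) atTop (nhds 0)) ∧
    ∀ r : ℕ → ℕ, (∀ k, 1 ≤ r k) →
      Tendsto (fun k => (∑ i ∈ Finset.Ioc (n (k + 1)) (n (k + 2)), a i) /
          ((r (k + 1) : ℝ) * ∑ i ∈ Finset.Ioc (n k) (n (k + 1)), a i)) atTop (nhds 0) →
      ∀ m : ℕ → ℕ,
        (∀ l, 1 ≤ l → ∀ s, s < r l → ∀ p, 1 ≤ p → p ≤ n l - n (l - 1) →
          m ((∑ j ∈ Finset.Icc 1 (l - 1), r j * (n j - n (j - 1))) + s * (n l - n (l - 1)) + p)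
            = n (l - 1) + p) →
        ∀ (b : ℕ → ℝ) (α : ℝ), (∃ M : ℝ, ∀ i, 1 ≤ i → |b i| ≤ M * a i) →
          Tendsto (fun k => (∑ i ∈ Finset.Ioc (n k) (n (k + 1)), b i) /
              (∑ i ∈ Finset.Ioc (n k) (n (k + 1)), a i)) atTop (nhds α) →
          Tendsto (fun k => (∑ i ∈ Finset.Icc 1 k, b (m i)) /
              (∑ i ∈ Finset.Icc 1 k, a (m i))) atTop (nhds α) :=
  stmt_1_general a ha n hmono
end

section
/- Let γ₀ and γ be continuous, concave, complete star-shaped curves in (ℝ_{>0})². Then A_{γ₀}(γ)/√(A(γ)) ≤ A_{γ₀}(γ₀)/√(A(γ₀)), with equality if and only if γ = c·γ₀ for some c ∈ ℝ_{>0}. -/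
open Real

/-- The `x`-coordinate of the star-shaped curve `θ ↦ (ρ(θ)cos θ, ρ(θ)sin θ)`. -/
noncomputable def Xc (ρ : ℝ → ℝ) : ℝ → ℝ := fun θ => ρ θ * Real.cos θ

/-- The `y`-coordinate of the star-shaped curve. -/
noncomputable def Yc (ρ : ℝ → ℝ) : ℝ → ℝ := fun θ => ρ θ * Real.sin θ

/-- A continuous complete star-shaped curve in `(ℝ_{>0})²`. -/
def IsStarCurve (ρ : ℝ → ℝ) : Prop :=
  ContinuousOn ρ (Set.Icc 0 (π / 2)) ∧ ∀ θ ∈ Set.Icc (0:ℝ) (π / 2), 0 < ρ θ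

/-- Concavity of the curve: `det(γ(θ') − γ(θ), γ(θ'') − γ(θ')) ≤ 0` for `θ < θ' < θ''`. -/
def IsConcaveCurve (ρ : ℝ → ℝ) : Prop :=
  ∀ θ ∈ Set.Icc (0:ℝ) (π / 2), ∀ θ' ∈ Set.Icc (0:ℝ) (π / 2), ∀ θ'' ∈ Set.Icc (0:ℝ) (π / 2),
    θ < θ' → θ' < θ'' →
      (Xc ρ θ' - Xc ρ θ) * (Yc ρ θ'' - Yc ρ θ') -
          (Yc ρ θ' - Yc ρ θ) * (Xc ρ θ'' - Xc ρ θ') ≤ 0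

/-- `A(γ)`. -/
noncomputable def area (ρ : ℝ → ℝ) : ℝ := ∫ θ in (0:ℝ)..(π / 2), ρ θ ^ 2 / 2

/-- `A_{γ₀}(γ) = ∫_γ (min_{q ∈ γ₀} q·ν(p)) dμ_γ(p)` with `dμ_γ = |∂_θ γ| dθ`:
since `ν(θ)·|∂_θ γ(θ)| = (y'(θ), −x'(θ))`, this is
`∫_0^{π/2} inf_{φ ∈ [0,π/2]} (x₀(φ) y'(θ) − y₀(φ) x'(θ)) dθ` (derivatives exist a.e.). -/
noncomputable def AwInf (ρ₀ ρ : ℝ → ℝ) : ℝ :=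
  ∫ θ in (0:ℝ)..(π / 2),
    ⨅ φ : Set.Icc (0:ℝ) (π / 2),
      (Xc ρ₀ ↑φ * deriv (Yc ρ) θ - Yc ρ₀ ↑φ * deriv (Xc ρ) θ)

section AuxLemmas
open MeasureTheory Set Filter Topology intervalIntegral

lemma pb_pos : (0:ℝ) < π / 2 := by positivity

lemma rho_eq (ρ : ℝ → ℝ) (t : ℝ) : Xc ρ t * Real.cos t + Yc ρ t * Real.sin t = ρ t := by
  simp only [Xc, Yc]
  linear_combination (ρ t) * Real.sin_sq_add_cos_sq t

/-- If both coordinates are differentiable, the cross combination of derivatives is ρ. -/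
lemma deriv_cross (ρ : ℝ → ℝ) {θ : ℝ} (hx : DifferentiableAt ℝ (Xc ρ) θ)
    (hy : DifferentiableAt ℝ (Yc ρ) θ) :
    Real.cos θ * deriv (Yc ρ) θ - Real.sin θ * deriv (Xc ρ) θ = ρ θ := by
  have hρdef : ρ = fun t => Xc ρ t * Real.cos t + Yc ρ t * Real.sin t :=
    funext fun t => (rho_eq ρ t).symm
  have hρ : HasDerivAt ρ
      (deriv (Xc ρ) θ * Real.cos θ + Xc ρ θ * (-Real.sin θ) +
        (deriv (Yc ρ) θ * Real.sin θ + Yc ρ θ * Real.cos θ)) θ := by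
    have h1 := (hx.hasDerivAt.mul (Real.hasDerivAt_cos θ)).add
      (hy.hasDerivAt.mul (Real.hasDerivAt_sin θ))
    exact h1.congr_of_eventuallyEq (Filter.Eventually.of_forall fun t => (rho_eq ρ t).symm)
  have hY : HasDerivAt (Yc ρ) (deriv ρ θ * Real.sin θ + ρ θ * Real.cos θ) θ :=
    hρ.differentiableAt.hasDerivAt.mul (Real.hasDerivAt_sin θ)
  have hX : HasDerivAt (Xc ρ) (deriv ρ θ * Real.cos θ + ρ θ * (-Real.sin θ)) θ :=
    hρ.differentiableAt.hasDerivAt.mul (Real.hasDerivAt_cos θ)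
  have hYd : deriv (Yc ρ) θ = deriv ρ θ * Real.sin θ + ρ θ * Real.cos θ := hY.deriv
  have hXd : deriv (Xc ρ) θ = deriv ρ θ * Real.cos θ + ρ θ * (-Real.sin θ) := hX.deriv
  rw [hYd, hXd]
  linear_combination (ρ θ) * Real.sin_sq_add_cos_sq θ

/-- At interior points, the two coordinates are differentiable simultaneously. -/
lemma diff_iff (ρ : ℝ → ℝ) {θ : ℝ} (hθ : θ ∈ Set.Ioo 0 (π / 2)) :
    DifferentiableAt ℝ (Xc ρ) θ ↔ DifferentiableAt ℝ (Yc ρ) θ := by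
  have hcos : 0 < Real.cos θ := Real.cos_pos_of_mem_Ioo
    ⟨by linarith [hθ.1, pb_pos], hθ.2⟩
  have hsin : 0 < Real.sin θ := Real.sin_pos_of_pos_of_lt_pi hθ.1
    (by linarith [hθ.2, Real.pi_pos])
  constructor
  · intro hx
    have hev : ρ =ᶠ[𝓝 θ] fun t => Xc ρ t / Real.cos t := by
      have : ∀ᶠ t in 𝓝 θ, Real.cos t ≠ 0 :=
        Real.continuous_cos.continuousAt.eventually_ne hcos.ne'
      filter_upwards [this] with t ht
      simp only [Xc]; field_simp
    have hρ : DifferentiableAt ℝ ρ θ :=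
      ((hx.div (Real.differentiable_cos.differentiableAt) hcos.ne')).congr_of_eventuallyEq hev
    exact hρ.mul Real.differentiable_sin.differentiableAt
  · intro hy
    have hev : ρ =ᶠ[𝓝 θ] fun t => Yc ρ t / Real.sin t := by
      have : ∀ᶠ t in 𝓝 θ, Real.sin t ≠ 0 :=
        Real.continuous_sin.continuousAt.eventually_ne hsin.ne'
      filter_upwards [this] with t ht
      simp only [Yc]; field_simp
    have hρ : DifferentiableAt ℝ ρ θ :=
      ((hy.div (Real.differentiable_sin.differentiableAt) hsin.ne')).congr_of_eventuallyEq hev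
    exact hρ.mul Real.differentiable_cos.differentiableAt

lemma derivs_zero (ρ : ℝ → ℝ) {θ : ℝ} (hθ : θ ∈ Set.Ioo 0 (π / 2))
    (hnd : ¬(DifferentiableAt ℝ (Xc ρ) θ ∧ DifferentiableAt ℝ (Yc ρ) θ)) :
    deriv (Xc ρ) θ = 0 ∧ deriv (Yc ρ) θ = 0 := by
  have hx : ¬ DifferentiableAt ℝ (Xc ρ) θ := by
    intro hx; exact hnd ⟨hx, (diff_iff ρ hθ).1 hx⟩
  have hy : ¬ DifferentiableAt ℝ (Yc ρ) θ := by
    intro hy; exact hnd ⟨(diff_iff ρ hθ).2 hy, hy⟩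
  exact ⟨deriv_zero_of_not_differentiableAt hx, deriv_zero_of_not_differentiableAt hy⟩

lemma star_cross {ρ : ℝ → ℝ} (h : IsStarCurve ρ) {a b : ℝ}
    (ha : a ∈ Set.Icc (0:ℝ) (π/2)) (hb : b ∈ Set.Icc (0:ℝ) (π/2)) (hab : a < b) :
    0 < Xc ρ a * Yc ρ b - Yc ρ a * Xc ρ b := by
  have key : Xc ρ a * Yc ρ b - Yc ρ a * Xc ρ b = ρ a * ρ b * Real.sin (b - a) := by
    simp only [Xc, Yc, Real.sin_sub]; ring
  rw [key]
  have h1 : 0 < Real.sin (b - a) := Real.sin_pos_of_pos_of_lt_pi (by linarith)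
    (by have := ha.1; have := hb.2; have := Real.pi_pos; linarith)
  have := h.2 a ha; have := h.2 b hb
  positivity

lemma Y_zero (ρ : ℝ → ℝ) : Yc ρ 0 = 0 := by simp [Yc]
lemma X_pb (ρ : ℝ → ℝ) : Xc ρ (π/2) = 0 := by simp [Xc]
lemma X_zero (ρ : ℝ → ℝ) : Xc ρ 0 = ρ 0 := by simp [Xc]
lemma Y_pb (ρ : ℝ → ℝ) : Yc ρ (π/2) = ρ (π/2) := by simp [Yc]

lemma X_nonneg {ρ : ℝ → ℝ} (h : IsStarCurve ρ) {a : ℝ} (ha : a ∈ Set.Icc (0:ℝ) (π/2)) :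
    0 ≤ Xc ρ a := by
  have := h.2 a ha
  have hcos : 0 ≤ Real.cos a := Real.cos_nonneg_of_mem_Icc
    ⟨by linarith [ha.1, Real.pi_pos], ha.2⟩
  exact mul_nonneg this.le hcos

lemma Y_nonneg {ρ : ℝ → ℝ} (h : IsStarCurve ρ) {a : ℝ} (ha : a ∈ Set.Icc (0:ℝ) (π/2)) :
    0 ≤ Yc ρ a := by
  have := h.2 a ha
  have hsin : 0 ≤ Real.sin a := Real.sin_nonneg_of_nonneg_of_le_pi ha.1
    (by have := Real.pi_pos; linarith [ha.2])
  exact mul_nonneg this.le hsin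

lemma X_pos {ρ : ℝ → ℝ} (h : IsStarCurve ρ) {a : ℝ} (ha : a ∈ Set.Icc (0:ℝ) (π/2))
    (ha' : a < π/2) : 0 < Xc ρ a := by
  have := h.2 a ha
  have hcos : 0 < Real.cos a := Real.cos_pos_of_mem_Ioo
    ⟨by linarith [ha.1, Real.pi_pos], ha'⟩
  exact mul_pos this hcos

/-- All interior points lie below the chord between the endpoints. -/
lemma chord {ρ : ℝ → ℝ} (h : IsStarCurve ρ) (hc : IsConcaveCurve ρ) {θ : ℝ}
    (hθ : θ ∈ Set.Ioo (0:ℝ) (π/2)) :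
    Xc ρ θ * ρ (π/2) + ρ 0 * Yc ρ θ ≤ ρ 0 * ρ (π/2) := by
  have h0 : (0:ℝ) ∈ Set.Icc (0:ℝ) (π/2) := ⟨le_refl _, pb_pos.le⟩
  have h2 : (π/2 : ℝ) ∈ Set.Icc (0:ℝ) (π/2) := ⟨pb_pos.le, le_refl _⟩
  have hm : θ ∈ Set.Icc (0:ℝ) (π/2) := ⟨hθ.1.le, hθ.2.le⟩
  have := hc 0 h0 θ hm (π/2) h2 hθ.1 hθ.2
  rw [Y_zero, X_pb, X_zero, Y_pb] at this
  nlinarith [this]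

lemma X_anti {ρ : ℝ → ℝ} (h : IsStarCurve ρ) (hc : IsConcaveCurve ρ) :
    AntitoneOn (Xc ρ) (Set.Icc (0:ℝ) (π/2)) := by
  intro a ha b hb hab
  rcases eq_or_lt_of_le hab with rfl | hab
  · exact le_refl _
  by_contra hX
  push_neg at hX
  rcases eq_or_lt_of_le hb.2 with hb2 | hb2
  · have := X_nonneg h ha
    rw [hb2, X_pb ρ] at hX; linarith
  -- b < π/2, so Xc b > 0
  have hXb : 0 < Xc ρ b := X_pos h hb hb2
  have hcross := star_cross h ha hb hab
  have hYa : 0 ≤ Yc ρ a := Y_nonneg h ha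
  have hXa0 : 0 ≤ Xc ρ a := X_nonneg h ha
  have hY : Yc ρ a < Yc ρ b := by
    by_contra hY'
    push_neg at hY'
    nlinarith [mul_nonneg hXa0 (sub_nonneg.mpr hY'), mul_nonneg hYa (sub_nonneg.mpr hX.le)]
  -- concavity triple (a, b, π/2)
  have htrip := hc a ha b hb (π/2) ⟨pb_pos.le, le_refl _⟩ hab hb2
  rw [X_pb, Y_pb] at htrip
  have hYb2 : ρ (π/2) < Yc ρ b := by nlinarith
  have hch := chord h hc ⟨lt_of_le_of_lt ha.1 hab, hb2⟩
  have hρ0 : 0 < ρ 0 := h.2 0 ⟨le_refl _, pb_pos.le⟩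
  have hρ2 : 0 < ρ (π/2) := h.2 (π/2) ⟨pb_pos.le, le_refl _⟩
  nlinarith

lemma Y_mono {ρ : ℝ → ℝ} (h : IsStarCurve ρ) (hc : IsConcaveCurve ρ) :
    MonotoneOn (Yc ρ) (Set.Icc (0:ℝ) (π/2)) := by
  intro a ha b hb hab
  rcases eq_or_lt_of_le hab with rfl | hab
  · exact le_refl _
  by_contra hY
  push_neg at hY
  have hYb : 0 ≤ Yc ρ b := Y_nonneg h hb
  have hYa : 0 < Yc ρ a := lt_of_le_of_lt hYb hY
  have ha0 : 0 < a := by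
    rcases eq_or_lt_of_le ha.1 with h0 | h0
    · exfalso; rw [← h0, Y_zero] at hYa; linarith
    · exact h0
  have ha2 : a < π/2 := lt_of_lt_of_le hab hb.2
  have hXa : 0 < Xc ρ a := X_pos h ha ha2
  have hcross := star_cross h ha hb hab
  have hX : Xc ρ b < Xc ρ a := by nlinarith
  -- concavity triple (0, a, b)
  have htrip := hc 0 ⟨le_refl _, pb_pos.le⟩ a ha b hb (lt_of_le_of_lt (le_refl 0) ha0) hab
  rw [Y_zero, X_zero] at htrip
  have hXa0 : ρ 0 < Xc ρ a := by nlinarith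
  have hch := chord h hc ⟨ha0, ha2⟩
  have hρ0 : 0 < ρ 0 := h.2 0 ⟨le_refl _, pb_pos.le⟩
  have hρ2 : 0 < ρ (π/2) := h.2 (π/2) ⟨pb_pos.le, le_refl _⟩
  nlinarith

/-- Almost every interior point is a differentiability point of both coordinates. -/
lemma ae_diff {ρ : ℝ → ℝ} (h : IsStarCurve ρ) (hc : IsConcaveCurve ρ) :
    ∀ᵐ θ, θ ∈ Set.Ioo (0:ℝ) (π/2) →
      (DifferentiableAt ℝ (Xc ρ) θ ∧ DifferentiableAt ℝ (Yc ρ) θ) := by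
  have hx : MonotoneOn (fun t => -Xc ρ t) (Set.Icc (0:ℝ) (π/2)) := by
    intro a ha b hb hab; simpa using X_anti h hc ha hb hab
  have hy := Y_mono h hc
  filter_upwards [hx.ae_differentiableWithinAt_of_mem, hy.ae_differentiableWithinAt_of_mem]
    with θ hdx hdy hθ
  have hmem : θ ∈ Set.Icc (0:ℝ) (π/2) := ⟨hθ.1.le, hθ.2.le⟩
  have hnhds : Set.Icc (0:ℝ) (π/2) ∈ 𝓝 θ := Icc_mem_nhds hθ.1 hθ.2
  have h1 : DifferentiableAt ℝ (fun t => -Xc ρ t) θ :=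
    (hdx hmem).differentiableAt hnhds
  have h2 : DifferentiableAt ℝ (Yc ρ) θ := (hdy hmem).differentiableAt hnhds
  refine ⟨?_, h2⟩
  have := h1.neg
  simpa using this

/-- Concavity implies the diagonal choice minimizes the linear functional. -/
lemma diag_min {ρ : ℝ → ℝ} (hc : IsConcaveCurve ρ) {θ : ℝ} (hθ : θ ∈ Set.Ioo (0:ℝ) (π/2))
    (hx : DifferentiableAt ℝ (Xc ρ) θ) (hy : DifferentiableAt ℝ (Yc ρ) θ)
    {φ : ℝ} (hφ : φ ∈ Set.Icc (0:ℝ) (π/2)) :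
    Xc ρ θ * deriv (Yc ρ) θ - Yc ρ θ * deriv (Xc ρ) θ ≤
      Xc ρ φ * deriv (Yc ρ) θ - Yc ρ φ * deriv (Xc ρ) θ := by
  have hθI : θ ∈ Set.Icc (0:ℝ) (π/2) := ⟨hθ.1.le, hθ.2.le⟩
  have hXs : Filter.Tendsto (slope (Xc ρ) θ) (𝓝[≠] θ) (𝓝 (deriv (Xc ρ) θ)) :=
    hasDerivAt_iff_tendsto_slope.mp hx.hasDerivAt
  have hYs : Filter.Tendsto (slope (Yc ρ) θ) (𝓝[≠] θ) (𝓝 (deriv (Yc ρ) θ)) :=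
    hasDerivAt_iff_tendsto_slope.mp hy.hasDerivAt
  rcases lt_trichotomy φ θ with hlt | heq | hgt
  · -- φ < θ : approach θ from the left
    have hle : (𝓝[<] θ) ≤ (𝓝[≠] θ) := nhdsWithin_mono θ (fun t ht => ne_of_lt ht)
    have hXt : Filter.Tendsto (Xc ρ) (𝓝[<] θ) (𝓝 (Xc ρ θ)) :=
      hx.continuousAt.tendsto.mono_left nhdsWithin_le_nhds
    have hYt : Filter.Tendsto (Yc ρ) (𝓝[<] θ) (𝓝 (Yc ρ θ)) :=
      hy.continuousAt.tendsto.mono_left nhdsWithin_le_nhds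
    have hlim : Filter.Tendsto
        (fun t => (Xc ρ t - Xc ρ φ) * slope (Yc ρ) θ t - (Yc ρ t - Yc ρ φ) * slope (Xc ρ) θ t)
        (𝓝[<] θ)
        (𝓝 ((Xc ρ θ - Xc ρ φ) * deriv (Yc ρ) θ - (Yc ρ θ - Yc ρ φ) * deriv (Xc ρ) θ)) :=
      ((hXt.sub tendsto_const_nhds).mul (hYs.mono_left hle)).sub
        ((hYt.sub tendsto_const_nhds).mul (hXs.mono_left hle))
    have hmem : Set.Ioo φ θ ∈ 𝓝[<] θ := Ioo_mem_nhdsLT_of_mem ⟨hlt, le_refl θ⟩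
    have key : (Xc ρ θ - Xc ρ φ) * deriv (Yc ρ) θ - (Yc ρ θ - Yc ρ φ) * deriv (Xc ρ) θ ≤ 0 := by
      refine le_of_tendsto hlim (Filter.eventually_of_mem hmem fun t ht => ?_)
      have htI : t ∈ Set.Icc (0:ℝ) (π/2) := ⟨le_trans hφ.1 ht.1.le, le_trans ht.2.le hθI.2⟩
      have hdet := hc φ hφ t htI θ hθI ht.1 ht.2
      have hts : 0 < θ - t := by linarith [ht.2]
      have hrw : (Xc ρ t - Xc ρ φ) * slope (Yc ρ) θ t - (Yc ρ t - Yc ρ φ) * slope (Xc ρ) θ t =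
          ((Xc ρ t - Xc ρ φ) * (Yc ρ θ - Yc ρ t) - (Yc ρ t - Yc ρ φ) * (Xc ρ θ - Xc ρ t)) /
            (θ - t) := by
        rw [slope_def_field, slope_def_field]
        have h1 : t - θ ≠ 0 := by linarith
        field_simp
        ring
      rw [hrw]
      exact div_nonpos_of_nonpos_of_nonneg hdet hts.le
    linarith
  · rw [heq]
  · -- θ < φ : approach θ from the right
    have hle : (𝓝[>] θ) ≤ (𝓝[≠] θ) := nhdsWithin_mono θ (fun t ht => ne_of_gt ht)
    have hXt : Filter.Tendsto (Xc ρ) (𝓝[>] θ) (𝓝 (Xc ρ θ)) :=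
      hx.continuousAt.tendsto.mono_left nhdsWithin_le_nhds
    have hYt : Filter.Tendsto (Yc ρ) (𝓝[>] θ) (𝓝 (Yc ρ θ)) :=
      hy.continuousAt.tendsto.mono_left nhdsWithin_le_nhds
    have hlim : Filter.Tendsto
        (fun t => slope (Xc ρ) θ t * (Yc ρ φ - Yc ρ t) - slope (Yc ρ) θ t * (Xc ρ φ - Xc ρ t))
        (𝓝[>] θ)
        (𝓝 (deriv (Xc ρ) θ * (Yc ρ φ - Yc ρ θ) - deriv (Yc ρ) θ * (Xc ρ φ - Xc ρ θ))) :=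
      ((hXs.mono_left hle).mul (tendsto_const_nhds.sub hYt)).sub
        ((hYs.mono_left hle).mul (tendsto_const_nhds.sub hXt))
    have hmem : Set.Ioo θ φ ∈ 𝓝[>] θ := Ioo_mem_nhdsGT_of_mem ⟨le_refl θ, hgt⟩
    have key : deriv (Xc ρ) θ * (Yc ρ φ - Yc ρ θ) - deriv (Yc ρ) θ * (Xc ρ φ - Xc ρ θ) ≤ 0 := by
      refine le_of_tendsto hlim (Filter.eventually_of_mem hmem fun t ht => ?_)
      have htI : t ∈ Set.Icc (0:ℝ) (π/2) := ⟨le_trans hθI.1 ht.1.le, le_trans ht.2.le hφ.2⟩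
      have hdet := hc θ hθI t htI φ hφ ht.1 ht.2
      have hts : 0 < t - θ := by linarith [ht.1]
      have hrw : slope (Xc ρ) θ t * (Yc ρ φ - Yc ρ t) - slope (Yc ρ) θ t * (Xc ρ φ - Xc ρ t) =
          ((Xc ρ t - Xc ρ θ) * (Yc ρ φ - Yc ρ t) - (Yc ρ t - Yc ρ θ) * (Xc ρ φ - Xc ρ t)) /
            (t - θ) := by
        rw [slope_def_field, slope_def_field]
        ring
      rw [hrw]
      exact div_nonpos_of_nonpos_of_nonneg hdet hts.le
    linarith

instance : Nonempty (Set.Icc (0:ℝ) (π/2)) := ⟨⟨0, ⟨le_refl _, pb_pos.le⟩⟩⟩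

/-- The infimum family is bounded below. -/
lemma bdd_below_family {ρ₀ : ℝ → ℝ} (h₀ : IsStarCurve ρ₀) (hc₀ : IsConcaveCurve ρ₀) (a b : ℝ) :
    BddBelow (Set.range fun φ : Set.Icc (0:ℝ) (π/2) => Xc ρ₀ ↑φ * a - Yc ρ₀ ↑φ * b) := by
  refine ⟨-(ρ₀ 0 * |a| + ρ₀ (π/2) * |b|), ?_⟩
  rintro v ⟨φ, rfl⟩
  have hφ := φ.2
  have hX0 : 0 ≤ Xc ρ₀ ↑φ := X_nonneg h₀ hφ
  have hY0 : 0 ≤ Yc ρ₀ ↑φ := Y_nonneg h₀ hφ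
  have hXle : Xc ρ₀ ↑φ ≤ ρ₀ 0 := by
    have := X_anti h₀ hc₀ ⟨le_refl _, pb_pos.le⟩ hφ hφ.1
    rwa [X_zero] at this
  have hYle : Yc ρ₀ ↑φ ≤ ρ₀ (π/2) := by
    have := Y_mono h₀ hc₀ hφ ⟨pb_pos.le, le_refl _⟩ hφ.2
    rwa [Y_pb] at this
  have h1 : -(ρ₀ 0 * |a|) ≤ Xc ρ₀ ↑φ * a := by
    nlinarith [mul_le_mul_of_nonneg_left (neg_abs_le a) hX0,
      mul_le_mul_of_nonneg_right hXle (abs_nonneg a)]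
  have h2 : -(ρ₀ (π/2) * |b|) ≤ -(Yc ρ₀ ↑φ * b) := by
    nlinarith [mul_le_mul_of_nonneg_left (le_abs_self b) hY0,
      mul_le_mul_of_nonneg_right hYle (abs_nonneg b)]
  simp only [ge_iff_le]
  linarith

/-- Value of the inner infimum for the self term, at differentiability points. -/
lemma iInf_self_eq {ρ₀ : ℝ → ℝ} (h₀ : IsStarCurve ρ₀) (hc₀ : IsConcaveCurve ρ₀) {θ : ℝ}
    (hθ : θ ∈ Set.Ioo (0:ℝ) (π/2))
    (hx : DifferentiableAt ℝ (Xc ρ₀) θ) (hy : DifferentiableAt ℝ (Yc ρ₀) θ) :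
    (⨅ φ : Set.Icc (0:ℝ) (π/2),
        (Xc ρ₀ ↑φ * deriv (Yc ρ₀) θ - Yc ρ₀ ↑φ * deriv (Xc ρ₀) θ)) = ρ₀ θ ^ 2 := by
  have hθI : θ ∈ Set.Icc (0:ℝ) (π/2) := ⟨hθ.1.le, hθ.2.le⟩
  have hdiag : Xc ρ₀ θ * deriv (Yc ρ₀) θ - Yc ρ₀ θ * deriv (Xc ρ₀) θ = ρ₀ θ ^ 2 := by
    have hcr := deriv_cross ρ₀ hx hy
    simp only [Xc, Yc]
    linear_combination (ρ₀ θ) * hcr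
  refine le_antisymm ?_ ?_
  · calc (⨅ φ : Set.Icc (0:ℝ) (π/2), (Xc ρ₀ ↑φ * deriv (Yc ρ₀) θ - Yc ρ₀ ↑φ * deriv (Xc ρ₀) θ))
        ≤ Xc ρ₀ θ * deriv (Yc ρ₀) θ - Yc ρ₀ θ * deriv (Xc ρ₀) θ :=
          ciInf_le (bdd_below_family h₀ hc₀ _ _) ⟨θ, hθI⟩
      _ = ρ₀ θ ^ 2 := hdiag
  · rw [← hdiag]
    exact le_ciInf fun φ => diag_min hc₀ hθ hx hy φ.2

/-- The inner infimum of the mixed term is at most `ρ₀ θ * ρ θ`. -/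
lemma iInf_le_mul {ρ₀ ρ : ℝ → ℝ} (h₀ : IsStarCurve ρ₀) (hc₀ : IsConcaveCurve ρ₀)
    (h : IsStarCurve ρ) {θ : ℝ} (hθ : θ ∈ Set.Ioo (0:ℝ) (π/2)) :
    (⨅ φ : Set.Icc (0:ℝ) (π/2),
        (Xc ρ₀ ↑φ * deriv (Yc ρ) θ - Yc ρ₀ ↑φ * deriv (Xc ρ) θ)) ≤ ρ₀ θ * ρ θ := by
  have hθI : θ ∈ Set.Icc (0:ℝ) (π/2) := ⟨hθ.1.le, hθ.2.le⟩
  by_cases hd : DifferentiableAt ℝ (Xc ρ) θ ∧ DifferentiableAt ℝ (Yc ρ) θ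
  · have hdiag : Xc ρ₀ θ * deriv (Yc ρ) θ - Yc ρ₀ θ * deriv (Xc ρ) θ = ρ₀ θ * ρ θ := by
      have hcr := deriv_cross ρ hd.1 hd.2
      simp only [Xc, Yc]
      linear_combination (ρ₀ θ) * hcr
    calc (⨅ φ : Set.Icc (0:ℝ) (π/2), (Xc ρ₀ ↑φ * deriv (Yc ρ) θ - Yc ρ₀ ↑φ * deriv (Xc ρ) θ))
        ≤ Xc ρ₀ θ * deriv (Yc ρ) θ - Yc ρ₀ θ * deriv (Xc ρ) θ :=
          ciInf_le (bdd_below_family h₀ hc₀ _ _) ⟨θ, hθI⟩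
      _ = ρ₀ θ * ρ θ := hdiag
  · obtain ⟨hX0, hY0⟩ := derivs_zero ρ hθ hd
    have hzero : (fun φ : Set.Icc (0:ℝ) (π/2) =>
        Xc ρ₀ ↑φ * deriv (Yc ρ) θ - Yc ρ₀ ↑φ * deriv (Xc ρ) θ) = fun _ => (0:ℝ) := by
      funext φ; rw [hX0, hY0]; ring
    rw [hzero, ciInf_const]
    exact (mul_pos (h₀.2 θ hθI) (h.2 θ hθI)).le

lemma ae_ne (c : ℝ) : ∀ᵐ (θ : ℝ), θ ≠ c := by
  rw [MeasureTheory.ae_iff]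
  simpa using measure_singleton c

lemma cont_sq {ρ : ℝ → ℝ} (h : IsStarCurve ρ) :
    IntervalIntegrable (fun θ => ρ θ ^ 2) volume 0 (π/2) := by
  apply ContinuousOn.intervalIntegrable
  rw [Set.uIcc_of_le pb_pos.le]
  exact (h.1.mul h.1).congr fun θ _ => by rw [Pi.mul_apply]; ring

lemma cont_mul {ρ₀ ρ : ℝ → ℝ} (h₀ : IsStarCurve ρ₀) (h : IsStarCurve ρ) :
    IntervalIntegrable (fun θ => ρ₀ θ * ρ θ) volume 0 (π/2) := by
  apply ContinuousOn.intervalIntegrable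
  rw [Set.uIcc_of_le pb_pos.le]
  exact h₀.1.mul h.1

lemma area_pos {ρ : ℝ → ℝ} (h : IsStarCurve ρ) : 0 < area ρ := by
  rw [area]
  apply intervalIntegral.intervalIntegral_pos_of_pos_on
  · exact (cont_sq h).div_const 2
  · intro x hx
    have := h.2 x ⟨hx.1.le, hx.2.le⟩
    positivity
  · exact pb_pos

lemma area_eq {ρ : ℝ → ℝ} : area ρ = (∫ θ in (0:ℝ)..(π/2), ρ θ ^ 2) / 2 := by
  rw [area, intervalIntegral.integral_div]

/-- `AwInf ρ₀ ρ₀ = ∫ ρ₀²`. -/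
lemma awinf_self {ρ₀ : ℝ → ℝ} (h₀ : IsStarCurve ρ₀) (hc₀ : IsConcaveCurve ρ₀) :
    AwInf ρ₀ ρ₀ = ∫ θ in (0:ℝ)..(π/2), ρ₀ θ ^ 2 := by
  rw [AwInf]
  apply intervalIntegral.integral_congr_ae
  filter_upwards [ae_diff h₀ hc₀, ae_ne (π/2)] with θ hdiff hne hθ
  rw [Set.uIoc_of_le pb_pos.le] at hθ
  have hθ' : θ ∈ Set.Ioo (0:ℝ) (π/2) := ⟨hθ.1, lt_of_le_of_ne hθ.2 hne⟩
  obtain ⟨hx, hy⟩ := hdiff hθ'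
  exact iInf_self_eq h₀ hc₀ hθ' hx hy

/-- restricted-a.e. membership in the open interval -/
lemma ae_restrict_Ioo :
    ∀ᵐ θ ∂(volume.restrict (Set.Icc (0:ℝ) (π/2))), θ ∈ Set.Ioo (0:ℝ) (π/2) := by
  have h1 : ∀ᵐ (θ : ℝ), θ ≠ 0 := ae_ne 0
  have h2 : ∀ᵐ (θ : ℝ), θ ≠ π/2 := ae_ne (π/2)
  have h3 : ∀ᵐ θ ∂(volume.restrict (Set.Icc (0:ℝ) (π/2))), θ ∈ Set.Icc (0:ℝ) (π/2) :=
    MeasureTheory.ae_restrict_mem measurableSet_Icc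
  filter_upwards [h3, MeasureTheory.ae_restrict_of_ae h1, MeasureTheory.ae_restrict_of_ae h2]
    with θ hmem hne0 hne2
  exact ⟨lt_of_le_of_ne hmem.1 (Ne.symm hne0), lt_of_le_of_ne hmem.2 hne2⟩

/-- `AwInf ρ₀ ρ ≤ ∫ ρ₀ ρ`. -/
lemma awinf_le {ρ₀ ρ : ℝ → ℝ} (h₀ : IsStarCurve ρ₀) (hc₀ : IsConcaveCurve ρ₀)
    (h : IsStarCurve ρ) :
    AwInf ρ₀ ρ ≤ ∫ θ in (0:ℝ)..(π/2), ρ₀ θ * ρ θ := by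
  by_cases hInt : IntervalIntegrable (fun θ => ⨅ φ : Set.Icc (0:ℝ) (π / 2),
      (Xc ρ₀ ↑φ * deriv (Yc ρ) θ - Yc ρ₀ ↑φ * deriv (Xc ρ) θ)) volume 0 (π/2)
  · rw [AwInf]
    apply intervalIntegral.integral_mono_ae_restrict pb_pos.le hInt (cont_mul h₀ h)
    filter_upwards [ae_restrict_Ioo] with θ hθ
    exact iInf_le_mul h₀ hc₀ h hθ
  · rw [AwInf, intervalIntegral.integral_undef hInt]
    apply intervalIntegral.integral_nonneg pb_pos.le
    intro u hu
    exact (mul_pos (h₀.2 u hu) (h.2 u hu)).le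

lemma expand_integral {ρ₀ ρ : ℝ → ℝ} (h₀ : IsStarCurve ρ₀) (h : IsStarCurve ρ) (a b : ℝ) :
    (∫ θ in (0:ℝ)..(π/2), (a * ρ₀ θ + b * ρ θ)^2)
      = a^2 * (∫ θ in (0:ℝ)..(π/2), ρ₀ θ^2) + 2*a*b * (∫ θ in (0:ℝ)..(π/2), ρ₀ θ * ρ θ)
        + b^2 * (∫ θ in (0:ℝ)..(π/2), ρ θ^2) := by
  rw [← intervalIntegral.integral_const_mul, ← intervalIntegral.integral_const_mul,
    ← intervalIntegral.integral_const_mul,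
    ← intervalIntegral.integral_add ((cont_sq h₀).const_mul _) ((cont_mul h₀ h).const_mul _),
    ← intervalIntegral.integral_add
      (((cont_sq h₀).const_mul _).add ((cont_mul h₀ h).const_mul _)) ((cont_sq h).const_mul _)]
  apply intervalIntegral.integral_congr
  intro θ _
  ring

lemma cs_sq {ρ₀ ρ : ℝ → ℝ} (h₀ : IsStarCurve ρ₀) (h : IsStarCurve ρ) :
    (∫ θ in (0:ℝ)..(π/2), ρ₀ θ * ρ θ)^2
      ≤ (∫ θ in (0:ℝ)..(π/2), ρ₀ θ^2) * (∫ θ in (0:ℝ)..(π/2), ρ θ^2) := by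
  set u := ∫ θ in (0:ℝ)..(π/2), ρ₀ θ^2 with hu
  set v := ∫ θ in (0:ℝ)..(π/2), ρ θ^2 with hv
  set I := ∫ θ in (0:ℝ)..(π/2), ρ₀ θ * ρ θ with hI
  have hup : 0 < u := by
    have := area_pos h₀; rw [area_eq] at this; rw [hu]; linarith
  have hnn : 0 ≤ ∫ θ in (0:ℝ)..(π/2), (I * ρ₀ θ + (-u) * ρ θ)^2 :=
    intervalIntegral.integral_nonneg pb_pos.le (fun θ _ => sq_nonneg _)
  rw [expand_integral h₀ h] at hnn
  nlinarith [hnn, hup]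

/-- A nonnegative continuous function with zero integral vanishes. -/
lemma eq_zero_of_integral_zero {g : ℝ → ℝ} (hg : ContinuousOn g (Set.Icc (0:ℝ) (π/2)))
    (hnn : ∀ θ ∈ Set.Icc (0:ℝ) (π/2), 0 ≤ g θ)
    (hint : ∫ θ in (0:ℝ)..(π/2), g θ = 0) :
    ∀ θ ∈ Set.Icc (0:ℝ) (π/2), g θ = 0 := by
  have hgi : IntervalIntegrable g volume 0 (π/2) := by
    apply ContinuousOn.intervalIntegrable; rwa [Set.uIcc_of_le pb_pos.le]
  have hioc : Set.Ioc (π/2 : ℝ) 0 = ∅ := Set.Ioc_eq_empty (by push_neg; exact pb_pos.le)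
  have hsub : Set.Ioc (0:ℝ) (π/2) ∪ Set.Ioc (π/2 : ℝ) 0 = Set.Ioc (0:ℝ) (π/2) := by
    rw [hioc, Set.union_empty]
  have hae0 : 0 ≤ᵐ[volume.restrict (Set.Ioc (0:ℝ) (π/2) ∪ Set.Ioc (π/2:ℝ) 0)] g := by
    rw [hsub]
    filter_upwards [MeasureTheory.ae_restrict_mem measurableSet_Ioc] with θ hθ
    exact hnn θ ⟨hθ.1.le, hθ.2⟩
  have hae := (intervalIntegral.integral_eq_zero_iff_of_nonneg_ae hae0 hgi).mp hint
  rw [hsub] at hae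
  have hnull : (volume.restrict (Set.Ioc (0:ℝ) (π/2))) {t | ¬ g t = 0} = 0 := hae
  by_contra hcon
  push_neg at hcon
  obtain ⟨θ₀, hθ₀, hne⟩ := hcon
  have hpos : 0 < g θ₀ := lt_of_le_of_ne (hnn θ₀ hθ₀) (Ne.symm hne)
  have hev : ∀ᶠ t in 𝓝[Set.Icc (0:ℝ) (π/2)] θ₀, g θ₀ / 2 < g t :=
    (hg θ₀ hθ₀).eventually (eventually_gt_nhds (half_lt_self hpos))
  obtain ⟨δ, hδ, hball⟩ := Metric.mem_nhdsWithin_iff.mp hev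
  -- choose a subinterval J of Ioc 0 (π/2) inside the ball
  obtain ⟨l, r, hlr, hJIoc, hJball⟩ :
      ∃ l r : ℝ, l < r ∧ Set.Ioo l r ⊆ Set.Ioc (0:ℝ) (π/2) ∧
        Set.Ioo l r ⊆ Metric.ball θ₀ δ := by
    rcases eq_or_lt_of_le hθ₀.1 with h0 | h0
    · refine ⟨0, min δ (π/2), by positivity, ?_, ?_⟩
      · intro t ht; exact ⟨ht.1, le_of_lt (lt_of_lt_of_le ht.2 (min_le_right _ _))⟩
      · intro t ht
        rw [Metric.mem_ball, Real.dist_eq, ← h0, abs_lt]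
        have h2 := lt_of_lt_of_le ht.2 (min_le_left δ (π/2))
        constructor
        · linarith [ht.1]
        · linarith
    · refine ⟨max 0 (θ₀ - δ), θ₀, by apply max_lt h0 (by linarith), ?_, ?_⟩
      · intro t ht
        exact ⟨lt_of_le_of_lt (le_max_left _ _) ht.1, le_trans ht.2.le hθ₀.2⟩
      · intro t ht
        rw [Metric.mem_ball, Real.dist_eq, abs_lt]
        constructor
        · have := lt_of_le_of_lt (le_max_right 0 (θ₀ - δ)) ht.1; linarith
        · linarith [ht.2]
  have hJsub : Set.Ioo l r ⊆ {t | ¬ g t = 0} := by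
    intro t ht
    have htIcc : t ∈ Set.Icc (0:ℝ) (π/2) := ⟨(hJIoc ht).1.le, (hJIoc ht).2⟩
    have := hball ⟨hJball ht, htIcc⟩
    simp only [Set.mem_setOf_eq] at this ⊢
    intro h0
    rw [h0] at this
    linarith
  have hmono : (volume.restrict (Set.Ioc (0:ℝ) (π/2))) (Set.Ioo l r) = 0 :=
    le_antisymm (hnull ▸ measure_mono hJsub) (zero_le)
  rw [MeasureTheory.Measure.restrict_apply measurableSet_Ioo,
    Set.inter_eq_self_of_subset_left hJIoc, Real.volume_Ioo] at hmono
  exact absurd hmono (by simp [ENNReal.ofReal_eq_zero]; linarith)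

lemma area_scale {ρ₀ ρ : ℝ → ℝ} {c : ℝ}
    (heq : ∀ θ ∈ Set.Icc (0:ℝ) (π/2), ρ θ = c * ρ₀ θ) :
    area ρ = c^2 * area ρ₀ := by
  rw [area, area, ← intervalIntegral.integral_const_mul]
  apply intervalIntegral.integral_congr
  intro θ hθ
  rw [Set.uIcc_of_le pb_pos.le] at hθ
  simp only
  rw [heq θ hθ]
  ring

lemma awinf_scale {ρ₀ ρ : ℝ → ℝ} {c : ℝ} (hcp : 0 < c)
    (heq : ∀ θ ∈ Set.Icc (0:ℝ) (π/2), ρ θ = c * ρ₀ θ) :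
    AwInf ρ₀ ρ = c * AwInf ρ₀ ρ₀ := by
  rw [AwInf, AwInf, ← intervalIntegral.integral_const_mul]
  apply intervalIntegral.integral_congr_ae
  filter_upwards [ae_ne 0, ae_ne (π/2)] with θ h0 h2 hθ
  rw [Set.uIoc_of_le pb_pos.le] at hθ
  have hθ' : θ ∈ Set.Ioo (0:ℝ) (π/2) := ⟨hθ.1, lt_of_le_of_ne hθ.2 h2⟩
  have hnh : Set.Icc (0:ℝ) (π/2) ∈ 𝓝 θ := Icc_mem_nhds hθ'.1 hθ'.2
  have hYd : deriv (Yc ρ) θ = c * deriv (Yc ρ₀) θ := by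
    have hev : Yc ρ =ᶠ[𝓝 θ] fun t => c * Yc ρ₀ t :=
      Filter.eventually_of_mem hnh (fun t ht => by simp only [Yc]; rw [heq t ht]; ring)
    rw [hev.deriv_eq, deriv_const_mul_field]
  have hXd : deriv (Xc ρ) θ = c * deriv (Xc ρ₀) θ := by
    have hev : Xc ρ =ᶠ[𝓝 θ] fun t => c * Xc ρ₀ t :=
      Filter.eventually_of_mem hnh (fun t ht => by simp only [Xc]; rw [heq t ht]; ring)
    rw [hev.deriv_eq, deriv_const_mul_field]
  rw [hYd, hXd]
  calc (⨅ φ : Set.Icc (0:ℝ) (π/2),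
        (Xc ρ₀ ↑φ * (c * deriv (Yc ρ₀) θ) - Yc ρ₀ ↑φ * (c * deriv (Xc ρ₀) θ)))
      = ⨅ φ : Set.Icc (0:ℝ) (π/2),
          c * (Xc ρ₀ ↑φ * deriv (Yc ρ₀) θ - Yc ρ₀ ↑φ * deriv (Xc ρ₀) θ) :=
        iInf_congr (fun φ => by ring)
    _ = c * ⨅ φ : Set.Icc (0:ℝ) (π/2),
          (Xc ρ₀ ↑φ * deriv (Yc ρ₀) θ - Yc ρ₀ ↑φ * deriv (Xc ρ₀) θ) :=
        (Real.mul_iInf_of_nonneg hcp.le _).symm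

end AuxLemmas

set_option maxHeartbeats 1000000 in
/-- Lemma 6.6 (isoperimetric inequality, concave case): for continuous, concave,
complete star-shaped curves `γ₀, γ`,
`A_{γ₀}(γ)/√A(γ) ≤ A_{γ₀}(γ₀)/√A(γ₀)`, with equality iff `γ = c γ₀`, `c > 0`. -/
theorem stmt_6 (ρ₀ ρ : ℝ → ℝ)
    (h₀ : IsStarCurve ρ₀) (h : IsStarCurve ρ)
    (hc₀ : IsConcaveCurve ρ₀) (hc : IsConcaveCurve ρ) :
    AwInf ρ₀ ρ / Real.sqrt (area ρ) ≤ AwInf ρ₀ ρ₀ / Real.sqrt (area ρ₀) ∧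
    (AwInf ρ₀ ρ / Real.sqrt (area ρ) = AwInf ρ₀ ρ₀ / Real.sqrt (area ρ₀) ↔
      ∃ c : ℝ, 0 < c ∧ ∀ θ ∈ Set.Icc (0:ℝ) (π / 2), ρ θ = c * ρ₀ θ) := by
  have hA0p : 0 < area ρ₀ := area_pos h₀
  have hAp : 0 < area ρ := area_pos h
  set u := ∫ θ in (0:ℝ)..(π/2), ρ₀ θ ^ 2 with hu
  set v := ∫ θ in (0:ℝ)..(π/2), ρ θ ^ 2 with hv
  set I := ∫ θ in (0:ℝ)..(π/2), ρ₀ θ * ρ θ with hI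
  have hA0 : area ρ₀ = u / 2 := area_eq
  have hA : area ρ = v / 2 := area_eq
  have hup : 0 < u := by rw [hA0] at hA0p; linarith
  have hvp : 0 < v := by rw [hA] at hAp; linarith
  have hS : AwInf ρ₀ ρ₀ = u := awinf_self h₀ hc₀
  have hL : AwInf ρ₀ ρ ≤ I := awinf_le h₀ hc₀ h
  have hInn : 0 ≤ I :=
    intervalIntegral.integral_nonneg pb_pos.le fun θ hθ => (mul_pos (h₀.2 θ hθ) (h.2 θ hθ)).le
  have hcs : I ^ 2 ≤ u * v := cs_sq h₀ h
  set s₀ := Real.sqrt (area ρ₀) with hs₀def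
  set s := Real.sqrt (area ρ) with hsdef
  have hs₀ : 0 < s₀ := Real.sqrt_pos.mpr hA0p
  have hs : 0 < s := Real.sqrt_pos.mpr hAp
  have hs₀sq : s₀ ^ 2 = area ρ₀ := Real.sq_sqrt hA0p.le
  have hssq : s ^ 2 = area ρ := Real.sq_sqrt hAp.le
  have h4 : (2 * s₀ * s) ^ 2 = u * v := by
    have e1 : s₀ ^ 2 = u / 2 := by rw [hs₀sq, hA0]
    have e2 : s ^ 2 = v / 2 := by rw [hssq, hA]
    nlinarith [e1, e2]
  have hIle : I ≤ 2 * s₀ * s := by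
    nlinarith [hcs, hInn, mul_pos (mul_pos two_pos hs₀) hs]
  have hRHS : AwInf ρ₀ ρ₀ / s₀ = 2 * s₀ := by
    rw [hS, div_eq_iff hs₀.ne']
    nlinarith [hs₀sq, hA0]
  constructor
  · rw [hRHS, div_le_iff₀ hs]
    calc AwInf ρ₀ ρ ≤ I := hL
      _ ≤ 2 * s₀ * s := hIle
  constructor
  · intro heq
    rw [hRHS, div_eq_iff hs.ne'] at heq
    have hLval : AwInf ρ₀ ρ = 2 * s₀ * s := by linarith [heq]
    have hIeq : I = 2 * s₀ * s := le_antisymm hIle (hLval ▸ hL)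
    have hIpos : 0 < I := by rw [hIeq]; positivity
    set c := I / u with hcdef
    have hcp : 0 < c := div_pos hIpos hup
    have hIsq : I ^ 2 = u * v := by rw [hIeq, h4]
    have hzero : ∫ θ in (0:ℝ)..(π/2), ((-c) * ρ₀ θ + 1 * ρ θ) ^ 2 = 0 := by
      rw [expand_integral h₀ h, ← hu, ← hI, ← hv]
      have e1 : c * u = I := div_mul_cancel₀ I hup.ne'
      have e2' : (c * u) * (c * u) = I * I := by rw [e1]
      have e2 : c ^ 2 * u = v := by
        have h6 : (c ^ 2 * u) * u = v * u := by nlinarith [e2', hIsq]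
        exact mul_right_cancel₀ hup.ne' h6
      have e3 : c * I = v := by linear_combination e2 - c * e1
      linarith [e2, e3]
    have hg : ∀ θ ∈ Set.Icc (0:ℝ) (π/2), ((-c) * ρ₀ θ + 1 * ρ θ) ^ 2 = 0 := by
      apply eq_zero_of_integral_zero ?_ (fun θ _ => sq_nonneg _) hzero
      apply ContinuousOn.pow
      exact ((continuousOn_const.mul h₀.1).add (continuousOn_const.mul h.1))
    refine ⟨c, hcp, fun θ hθ => ?_⟩
    have := hg θ hθ
    have h5 : (-c) * ρ₀ θ + 1 * ρ θ = 0 := by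
      exact pow_eq_zero_iff (by norm_num) |>.mp this
    linarith [h5]
  · rintro ⟨c, hcp, hceq⟩
    have h1 : AwInf ρ₀ ρ = c * AwInf ρ₀ ρ₀ := awinf_scale hcp hceq
    have h2 : area ρ = c ^ 2 * area ρ₀ := area_scale hceq
    have h3 : s = c * s₀ := by
      rw [hsdef, h2, hs₀def, show c ^ 2 * area ρ₀ = (c * Real.sqrt (area ρ₀)) ^ 2 by
        rw [mul_pow, Real.sq_sqrt hA0p.le], Real.sqrt_sq (by positivity)]
    rw [h1, h3, mul_div_mul_left _ _ hcp.ne']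
end

section
/- Let Y be a closed manifold, λ_τ a smooth family of contact forms on Y parametrized by τ in an open set U ⊂ ℝ^N, and γ_τ ∈ P_emb(Y, λ_τ) a smooth family of embedded periodic Reeb orbits. Then the function τ ↦ ∫_{γ_τ} λ_τ is smooth and ∂_{τ_i}(∫_{γ_τ} λ_τ)(τ⁰) = ∫_{γ_{τ⁰}} ∂_{τ_i} λ_τ(τ⁰) for every i; i.e. the derivative of the period equals the integral of the derivative of the contact form over the fixed orbit. -/
open Filter intervalIntegral

/-- Lemma 5.1: derivative of the period of a smooth family of (embedded) periodic
Reeb orbits.  `Y` is embedded in the normed space `E`; `lam τ` is the smooth family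
of contact forms (1-forms on `E`), `γ τ` the smooth family of periodic orbits with
periods of parametrization `P τ` and velocity `γ' τ`.  The Reeb conditions are
`λ_τ(γ̇_τ) = 1` (so `∫_{γ_τ} λ_τ = ∫_0^{P τ} λ_τ(γ_τ(t))(γ̇_τ(t)) dt`) and
`dλ_τ(γ̇_τ, ·) = 0` (symmetry of the derivative of `λ_τ` in the orbit direction).
Then `τ ↦ ∫_{γ_τ} λ_τ` is smooth, and its directional derivative at any `τ⁰` in any
direction `v` equals `∫_{γ_{τ⁰}} ∂_v λ_τ (τ⁰)`. -/
theorem stmt_12 (F E : Type*)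
    [NormedAddCommGroup F] [NormedSpace ℝ F] [NormedAddCommGroup E] [NormedSpace ℝ E]
    (lam : F → E → (E →L[ℝ] ℝ)) (γ γ' : F → ℝ → E) (P : F → ℝ)
    (hlam : ContDiff ℝ (⊤ : ℕ∞) (fun p : F × E => lam p.1 p.2))
    (hγ : ContDiff ℝ (⊤ : ℕ∞) (fun p : F × ℝ => γ p.1 p.2))
    (hP : ContDiff ℝ (⊤ : ℕ∞) P) (hPpos : ∀ τ, 0 < P τ)
    (hperiodic : ∀ τ t, γ τ (t + P τ) = γ τ t)
    (hemb : ∀ τ, Set.InjOn (γ τ) (Set.Ico 0 (P τ)))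
    (hvel : ∀ τ t, HasDerivAt (γ τ) (γ' τ t) t)
    (hreeb1 : ∀ τ t, lam τ (γ τ t) (γ' τ t) = 1)
    (hreeb2 : ∀ τ t (w : E),
      fderiv ℝ (lam τ) (γ τ t) (γ' τ t) w = fderiv ℝ (lam τ) (γ τ t) w (γ' τ t)) :
    ContDiff ℝ (⊤ : ℕ∞) (fun τ => ∫ t in (0:ℝ)..(P τ), lam τ (γ τ t) (γ' τ t)) ∧
    ∀ (τ₀ : F) (v : F),
      HasDerivAt
        (fun s : ℝ =>
          ∫ t in (0:ℝ)..(P (τ₀ + s • v)),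
            lam (τ₀ + s • v) (γ (τ₀ + s • v) t) (γ' (τ₀ + s • v) t))
        (∫ t in (0:ℝ)..(P τ₀),
          fderiv ℝ (fun τ => lam τ (γ τ₀ t) (γ' τ₀ t)) τ₀ v) 0 := by
  classical
  set Γ : F × ℝ → E := fun p => γ p.1 p.2 with hΓdef
  set Λ : F × E → (E →L[ℝ] ℝ) := fun p => lam p.1 p.2 with hΛdef
  have hΓ : ContDiff ℝ (⊤ : ℕ∞) Γ := hγ
  have hΛ : ContDiff ℝ (⊤ : ℕ∞) Λ := hlam
  have hΓdiff : Differentiable ℝ Γ := hΓ.differentiable (by simp)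
  have hΛdiff : Differentiable ℝ Λ := hΛ.differentiable (by simp)
  have hDΓ : ContDiff ℝ (⊤ : ℕ∞) (fderiv ℝ Γ) := hΓ.fderiv_right (by simp)
  have hDΓdiff : Differentiable ℝ (fderiv ℝ Γ) := hDΓ.differentiable (by simp)
  have hlamτ : ∀ τ, ContDiff ℝ (⊤ : ℕ∞) (lam τ) := fun τ =>
    hΛ.comp (contDiff_const.prodMk contDiff_id)
  have hlamdiff : ∀ τ, Differentiable ℝ (lam τ) := fun τ =>
    (hlamτ τ).differentiable (by simp)
  -- velocity identification
  have hvel' : ∀ τ t, γ' τ t = fderiv ℝ Γ (τ, t) (0, 1) := by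
    intro τ t
    have hc : HasDerivAt (fun s : ℝ => (τ, s)) ((0 : F), (1 : ℝ)) t :=
      (hasDerivAt_const t τ).prodMk (hasDerivAt_id t)
    exact (hvel τ t).unique ((hΓdiff _).hasFDerivAt.comp_hasDerivAt t hc)
  -- integral of constant 1
  have hint : ∀ τ, (∫ t in (0:ℝ)..(P τ), lam τ (γ τ t) (γ' τ t)) = P τ := by
    intro τ
    have h : (fun t => lam τ (γ τ t) (γ' τ t)) = fun _ => (1 : ℝ) :=
      funext fun t => hreeb1 τ t
    rw [h]; simp
  constructor
  · have hfuneq : (fun τ => ∫ t in (0:ℝ)..(P τ), lam τ (γ τ t) (γ' τ t)) = P :=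
      funext hint
    rw [hfuneq]; exact hP
  intro τ₀ v
  set dP : ℝ := fderiv ℝ P τ₀ v with hdPdef
  set δγ : ℝ → E := fun t => fderiv ℝ Γ (τ₀, t) (v, 0) with hδγdef
  set δγ' : ℝ → E := fun t => fderiv ℝ (fderiv ℝ Γ) (τ₀, t) ((0 : F), (1 : ℝ)) (v, 0) with hδγ'def
  set k : ℝ → ℝ := fun t => lam τ₀ (γ τ₀ t) (δγ t) with hkdef
  set k' : ℝ → ℝ := fun t =>
    fderiv ℝ (lam τ₀) (γ τ₀ t) (γ' τ₀ t) (δγ t) + lam τ₀ (γ τ₀ t) (δγ' t) with hk'def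
  -- k has derivative k'
  have hprodt : ∀ t : ℝ, HasDerivAt (fun s : ℝ => (τ₀, s)) ((0 : F), (1 : ℝ)) t := fun t =>
    (hasDerivAt_const t τ₀).prodMk (hasDerivAt_id t)
  have hk : ∀ t, HasDerivAt k (k' t) t := by
    intro t
    have hc : HasDerivAt (fun t => lam τ₀ (γ τ₀ t))
        (fderiv ℝ (lam τ₀) (γ τ₀ t) (γ' τ₀ t)) t := by
      have := ((hlamdiff τ₀) (γ τ₀ t)).hasFDerivAt.comp_hasDerivAt t (hvel τ₀ t)
      simpa [Function.comp_def] using this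
    have hD : HasDerivAt (fun t => fderiv ℝ Γ (τ₀, t))
        (fderiv ℝ (fderiv ℝ Γ) (τ₀, t) ((0 : F), (1 : ℝ))) t :=
      (hDΓdiff _).hasFDerivAt.comp_hasDerivAt t (hprodt t)
    have hu : HasDerivAt δγ (δγ' t) t := by
      simpa using hD.clm_apply (hasDerivAt_const t ((v, 0) : F × ℝ))
    simpa using hc.clm_apply hu
  -- continuity of k'
  have hγτcont : Continuous (γ τ₀) :=
    hΓ.continuous.comp (continuous_const.prodMk continuous_id)
  have hδγcont : Continuous δγ := by
    exact (hDΓ.continuous.comp (continuous_const.prodMk continuous_id)).clm_apply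
      continuous_const
  have hδγ'cont : Continuous δγ' := by
    have : Continuous (fderiv ℝ (fderiv ℝ Γ)) := (hDΓ.fderiv_right (m := (⊤ : ℕ∞)) (by simp)).continuous
    exact ((this.comp (continuous_const.prodMk continuous_id)).clm_apply
      continuous_const).clm_apply continuous_const
  have hγ'cont : Continuous (fun t => γ' τ₀ t) := by
    have : Continuous (fun t : ℝ => fderiv ℝ Γ (τ₀, t) ((0 : F), (1 : ℝ))) :=
      (hDΓ.continuous.comp (continuous_const.prodMk continuous_id)).clm_apply
        continuous_const
    exact this.congr fun t => (hvel' τ₀ t).symm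
  have hk'cont : Continuous k' := by
    have h1 : Continuous (fun t => fderiv ℝ (lam τ₀) (γ τ₀ t)) :=
      ((hlamτ τ₀).fderiv_right (m := (⊤ : ℕ∞)) (by simp)).continuous.comp hγτcont
    exact ((h1.clm_apply hγ'cont).clm_apply hδγcont).add
      (((hΛ.continuous.comp (continuous_const.prodMk hγτcont)).clm_apply hδγ'cont).congr
        fun t => rfl)
  -- pointwise key identity
  have hkey : ∀ t, fderiv ℝ (fun τ => lam τ (γ τ₀ t) (γ' τ₀ t)) τ₀ v = -k' t := by
    intro t
    have hprodF : HasFDerivAt (fun τ : F => (τ, t))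
        ((ContinuousLinearMap.id ℝ F).prod 0) τ₀ :=
      (hasFDerivAt_id τ₀).prodMk (hasFDerivAt_const t τ₀)
    -- derivative of τ ↦ γ τ t
    have hγt : HasFDerivAt (fun τ => γ τ t)
        ((fderiv ℝ Γ (τ₀, t)).comp ((ContinuousLinearMap.id ℝ F).prod 0)) τ₀ := by
      have := (hΓdiff (τ₀, t)).hasFDerivAt.comp τ₀ hprodF
      simpa [Function.comp_def] using this
    -- derivative of τ ↦ γ' τ t
    have hWd : HasFDerivAt (fun p : F × ℝ => fderiv ℝ Γ p ((0:F),(1:ℝ)))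
        ((fderiv ℝ (fderiv ℝ Γ) (τ₀, t)).flip ((0:F),(1:ℝ))) (τ₀, t) := by
      simpa using ((hDΓdiff (τ₀, t)).hasFDerivAt).clm_apply
        (hasFDerivAt_const ((0:F),(1:ℝ)) (τ₀, t))
    have hw : HasFDerivAt (fun τ => γ' τ t)
        (((fderiv ℝ (fderiv ℝ Γ) (τ₀, t)).flip ((0:F),(1:ℝ))).comp
          ((ContinuousLinearMap.id ℝ F).prod 0)) τ₀ := by
      have h := hWd.comp τ₀ hprodF
      simp only [Function.comp_def] at h
      exact h.congr_of_eventuallyEq (Filter.Eventually.of_forall fun τ => hvel' τ t)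
    -- derivative of τ ↦ lam τ (γ τ t)
    have hcl : HasFDerivAt (fun τ => lam τ (γ τ t))
        ((fderiv ℝ Λ (τ₀, γ τ₀ t)).comp ((ContinuousLinearMap.id ℝ F).prod
          ((fderiv ℝ Γ (τ₀, t)).comp ((ContinuousLinearMap.id ℝ F).prod 0)))) τ₀ := by
      have := (hΛdiff (τ₀, γ τ₀ t)).hasFDerivAt.comp τ₀ ((hasFDerivAt_id τ₀).prodMk hγt)
      simpa [Function.comp_def] using this
    -- the total function is constant 1
    have htot := hcl.clm_apply hw
    have htot' : HasFDerivAt (fun _ : F => (1:ℝ))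
        ((lam τ₀ (γ τ₀ t)).comp
            (((fderiv ℝ (fderiv ℝ Γ) (τ₀, t)).flip ((0:F),(1:ℝ))).comp
              ((ContinuousLinearMap.id ℝ F).prod 0)) +
          ((fderiv ℝ Λ (τ₀, γ τ₀ t)).comp ((ContinuousLinearMap.id ℝ F).prod
            ((fderiv ℝ Γ (τ₀, t)).comp ((ContinuousLinearMap.id ℝ F).prod 0)))).flip
            (γ' τ₀ t)) τ₀ :=
      htot.congr_of_eventuallyEq (Filter.Eventually.of_forall fun τ => (hreeb1 τ t).symm)
    have hzero := htot'.unique (hasFDerivAt_const (1:ℝ) τ₀)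
    have h0v := DFunLike.congr_fun hzero v
    simp only [ContinuousLinearMap.add_apply, ContinuousLinearMap.comp_apply,
      ContinuousLinearMap.flip_apply, ContinuousLinearMap.prod_apply,
      ContinuousLinearMap.id_apply, ContinuousLinearMap.zero_apply] at h0v
    -- h0v : lam τ₀ (γ τ₀ t) (fderiv ℝ (fderiv ℝ Γ) (τ₀,t) (v,0) (0,1))
    --        + fderiv ℝ Λ (τ₀, γ τ₀ t) (v, fderiv ℝ Γ (τ₀,t) (v,0)) (γ' τ₀ t) = 0
    -- symmetry of second derivative
    have hsym : fderiv ℝ (fderiv ℝ Γ) (τ₀, t) (v, (0:ℝ)) ((0:F), (1:ℝ)) = δγ' t :=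
      (hΓ.contDiffAt.isSymmSndFDerivAt (by simp; exact WithTop.coe_le_coe.mpr (le_top : (2:ℕ∞) ≤ ⊤))) (v, 0) (0, 1)
    -- identification of the goal fderiv
    have hcx : HasFDerivAt (fun τ => lam τ (γ τ₀ t))
        ((fderiv ℝ Λ (τ₀, γ τ₀ t)).comp ((ContinuousLinearMap.id ℝ F).prod 0)) τ₀ := by
      have := (hΛdiff (τ₀, γ τ₀ t)).hasFDerivAt.comp τ₀
        ((hasFDerivAt_id (𝕜 := ℝ) τ₀).prodMk (hasFDerivAt_const (γ τ₀ t) τ₀))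
      simpa [Function.comp_def] using this
    have hgoalD := hcx.clm_apply (hasFDerivAt_const (γ' τ₀ t) τ₀)
    have hgoal : fderiv ℝ (fun τ => lam τ (γ τ₀ t) (γ' τ₀ t)) τ₀ v
        = fderiv ℝ Λ (τ₀, γ τ₀ t) (v, (0:E)) (γ' τ₀ t) := by
      rw [hgoalD.fderiv]
      simp
    -- partial derivative in E direction
    have hpartial : ∀ b : E, fderiv ℝ (lam τ₀) (γ τ₀ t) b = fderiv ℝ Λ (τ₀, γ τ₀ t) ((0:F), b) := by
      intro b
      have hlt : HasFDerivAt (lam τ₀)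
          ((fderiv ℝ Λ (τ₀, γ τ₀ t)).comp
            ((0 : E →L[ℝ] F).prod (ContinuousLinearMap.id ℝ E))) (γ τ₀ t) := by
        have := (hΛdiff (τ₀, γ τ₀ t)).hasFDerivAt.comp (γ τ₀ t)
          ((hasFDerivAt_const τ₀ (γ τ₀ t)).prodMk (hasFDerivAt_id (γ τ₀ t)))
        simpa [Function.comp_def] using this
      rw [hlt.fderiv]
      simp
    -- split the bilinear term
    have hsplit : fderiv ℝ Λ (τ₀, γ τ₀ t) (v, fderiv ℝ Γ (τ₀, t) (v, (0:ℝ))) (γ' τ₀ t)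
        = fderiv ℝ Λ (τ₀, γ τ₀ t) (v, (0:E)) (γ' τ₀ t)
          + fderiv ℝ Λ (τ₀, γ τ₀ t) ((0:F), fderiv ℝ Γ (τ₀, t) (v, (0:ℝ))) (γ' τ₀ t) := by
      rw [show ((v, fderiv ℝ Γ (τ₀, t) (v, (0:ℝ))) : F × E)
          = (v, (0:E)) + ((0:F), fderiv ℝ Γ (τ₀, t) (v, (0:ℝ))) by simp]
      rw [map_add]
      simp
    have hswap : fderiv ℝ Λ (τ₀, γ τ₀ t) ((0:F), fderiv ℝ Γ (τ₀, t) (v, (0:ℝ))) (γ' τ₀ t)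
        = fderiv ℝ (lam τ₀) (γ τ₀ t) (γ' τ₀ t) (δγ t) := by
      rw [← hpartial]
      exact (hreeb2 τ₀ t (δγ t)).symm ▸ rfl
    rw [hgoal, hk'def]
    beta_reduce
    have h2 : lam τ₀ (γ τ₀ t) (δγ' t)
        + (fderiv ℝ Λ (τ₀, γ τ₀ t) (v, (0:E)) (γ' τ₀ t)
          + fderiv ℝ (lam τ₀) (γ τ₀ t) (γ' τ₀ t) (δγ t)) = 0 := by
      rw [← hswap, ← hsplit, ← hsym]
      exact h0v
    linarith
  -- FTC
  have hFTC : (∫ t in (0:ℝ)..(P τ₀), k' t) = k (P τ₀) - k 0 :=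
    integral_eq_sub_of_hasDerivAt (fun t _ => hk t) (hk'cont.intervalIntegrable _ _)
  -- boundary term
  have hγP : γ τ₀ (P τ₀) = γ τ₀ 0 := by simpa using hperiodic τ₀ 0
  have hδγP : δγ (P τ₀) = δγ 0 - dP • γ' τ₀ (P τ₀) := by
    have hPd : HasFDerivAt P (fderiv ℝ P τ₀) τ₀ := ((hP.differentiable (by simp)) τ₀).hasFDerivAt
    have hL : HasFDerivAt (fun τ => Γ (τ, P τ))
        ((fderiv ℝ Γ (τ₀, P τ₀)).comp ((ContinuousLinearMap.id ℝ F).prod (fderiv ℝ P τ₀))) τ₀ :=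
      (hΓdiff _).hasFDerivAt.comp τ₀ ((hasFDerivAt_id τ₀).prodMk hPd)
    have hR : HasFDerivAt (fun τ => Γ (τ, (0:ℝ)))
        ((fderiv ℝ Γ (τ₀, (0:ℝ))).comp ((ContinuousLinearMap.id ℝ F).prod 0)) τ₀ :=
      (hΓdiff _).hasFDerivAt.comp τ₀ ((hasFDerivAt_id τ₀).prodMk (hasFDerivAt_const (0:ℝ) τ₀))
    have hfe : (fun τ => Γ (τ, P τ)) = fun τ => Γ (τ, (0:ℝ)) := by
      funext τ; simpa using hperiodic τ 0
    have heq := (hfe ▸ hL).unique hR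
    have hv := DFunLike.congr_fun heq v
    simp only [ContinuousLinearMap.comp_apply, ContinuousLinearMap.prod_apply,
      ContinuousLinearMap.id_apply, ContinuousLinearMap.zero_apply] at hv
    have hsum : δγ (P τ₀) + dP • (fderiv ℝ Γ (τ₀, P τ₀) ((0:F), (1:ℝ))) = δγ 0 := by
      rw [hδγdef]
      rw [← map_smul, ← map_add]
      convert hv using 2
      simp [Prod.ext_iff, hdPdef]
    rw [hvel' τ₀ (P τ₀)]
    exact eq_sub_of_add_eq hsum
  have hkP : k (P τ₀) = k 0 - dP := by
    show lam τ₀ (γ τ₀ (P τ₀)) (δγ (P τ₀)) = lam τ₀ (γ τ₀ 0) (δγ 0) - dP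
    rw [hδγP, map_sub, map_smul, hreeb1 τ₀ (P τ₀), hγP]
    simp
  -- main value computation
  have hval : (∫ t in (0:ℝ)..(P τ₀),
      fderiv ℝ (fun τ => lam τ (γ τ₀ t) (γ' τ₀ t)) τ₀ v) = dP := by
    rw [show (fun t => fderiv ℝ (fun τ => lam τ (γ τ₀ t) (γ' τ₀ t)) τ₀ v)
        = fun t => -k' t from funext hkey]
    rw [intervalIntegral.integral_neg, hFTC, hkP]
    ring
  rw [hval]
  -- final: derivative of s ↦ P (τ₀ + s • v)
  have hfun2 : (fun s : ℝ =>
      ∫ t in (0:ℝ)..(P (τ₀ + s • v)),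
        lam (τ₀ + s • v) (γ (τ₀ + s • v) t) (γ' (τ₀ + s • v) t))
      = fun s : ℝ => P (τ₀ + s • v) := funext fun s => hint _
  rw [hfun2]
  have hline : HasDerivAt (fun s : ℝ => τ₀ + s • v) v 0 := by
    simpa using ((hasDerivAt_id (0 : ℝ)).smul_const v).const_add τ₀
  have := ((hP.differentiable (by simp)) (τ₀ + (0 : ℝ) • v)).hasFDerivAt.comp_hasDerivAt 0 hline
  simpa [hdPdef, Function.comp_def] using this
end
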